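/- arXiv:1011.2365 — 12 statements merged into one kernel-verified Lean document; each statement's English description precedes it below -/
import Mathlib

section
/- If a sequence of real numbers (s_k) is strongly p-Cesàro convergent to s for some p > 0 (i.e., (1/n)·∑_{k=1}^n |s_k − s|^p → 0), then (s_k) is statistically convergent to s (i.e., for every ε > 0, (1/n)·|{k ≤ n : |s_k − s| ≥ ε}| → 0). -/
/-! Markov's inequality for the counting measure on `{1, …, n}`: the proportion of `k ≤ n` with
`ε ≤ |s k - t|` is at most `ε ^ (-p)` times the `n`-th mean of `|s k - t| ^ p`. -/

open Filter Finset

namespace Finset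

variable {ι : Type*}

theorem card_filter_le_mul_le_sum (s : Finset ι) {f : ι → ℝ} (c : ℝ) (hf : ∀ i ∈ s, 0 ≤ f i) :
    #(s.filter fun i => c ≤ f i) * c ≤ ∑ i ∈ s, f i :=
  calc #(s.filter fun i => c ≤ f i) * c = ∑ _i ∈ s.filter fun i => c ≤ f i, c := by
        rw [sum_const, nsmul_eq_mul]
    _ ≤ ∑ i ∈ s.filter fun i => c ≤ f i, f i := sum_le_sum fun i hi => (mem_filter.mp hi).2
    _ ≤ ∑ i ∈ s, f i := sum_le_sum_of_subset_of_nonneg (filter_subset _ _) fun i hi _ => hf i hi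

theorem card_filter_le_abs_mul_rpow_le_sum (s : Finset ι) (x : ι → ℝ) {ε p : ℝ}
    (hε : 0 ≤ ε) (hp : 0 ≤ p) :
    #(s.filter fun i => ε ≤ |x i|) * ε ^ p ≤ ∑ i ∈ s, |x i| ^ p := by
  have hsub : (s.filter fun i => ε ≤ |x i|) ⊆ s.filter fun i => ε ^ p ≤ |x i| ^ p := by
    intro i
    simp only [mem_filter]
    exact fun ⟨hi, h⟩ => ⟨hi, Real.rpow_le_rpow hε h hp⟩
  calc #(s.filter fun i => ε ≤ |x i|) * ε ^ p
      ≤ #(s.filter fun i => ε ^ p ≤ |x i| ^ p) * ε ^ p := by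
        gcongr
    _ ≤ ∑ i ∈ s, |x i| ^ p :=
        card_filter_le_mul_le_sum s _ fun i _ => Real.rpow_nonneg (abs_nonneg _) p

end Finset

/-- If a real sequence is strongly p-Cesàro convergent to `t` for some `p > 0`,
then it is statistically convergent to `t`. -/
theorem strong_cesaro_implies_statistical (s : ℕ → ℝ) (t : ℝ) (p : ℝ) (hp : 0 < p)
    (h : Tendsto (fun n : ℕ => (1 / (n : ℝ)) * ∑ k ∈ Finset.Icc 1 n, |s k - t| ^ p)
      atTop (nhds 0)) :
    ∀ ε > 0, Tendsto
      (fun n : ℕ =>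
        (((Finset.Icc 1 n).filter (fun k => ε ≤ |s k - t|)).card : ℝ) / (n : ℝ))
      atTop (nhds 0) := by
  intro ε hε
  have hεp : 0 < ε ^ p := Real.rpow_pos_of_pos hε p
  have hbound (n : ℕ) : (#((Icc 1 n).filter fun k => ε ≤ |s k - t|) : ℝ) / n ≤
      (ε ^ p)⁻¹ * ((1 / (n : ℝ)) * ∑ k ∈ Icc 1 n, |s k - t| ^ p) := by
    have hmarkov := card_filter_le_abs_mul_rpow_le_sum (Icc 1 n) (fun k => s k - t) hε.le hp.le
    rw [← le_div_iff₀ hεp] at hmarkov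
    calc (#((Icc 1 n).filter fun k => ε ≤ |s k - t|) : ℝ) / n
        ≤ (∑ k ∈ Icc 1 n, |s k - t| ^ p) / ε ^ p / n := by gcongr
      _ = _ := by ring
  simpa using squeeze_zero (fun n => by positivity) hbound (by simpa using h.const_mul (ε ^ p)⁻¹)
end

section
/- If a bounded sequence of real numbers (s_k) is statistically convergent to s, then for every p > 0 it is strongly p-Cesàro convergent to s. -/
/-!
Put `u k = |s k - t| ^ p`. It is bounded by `(R + |t|) ^ p`, and `{ε ≤ u k} = {ε ^ p⁻¹ ≤ |s k - t|}`,
so its super-level sets have density tending to `0`. Splitting the sum at level `ε` bounds the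
`n`-th Cesàro mean of `u` by `C * density + ε`, so its limsup is at most `ε` for every `ε > 0`.
-/

open Filter Finset

theorem Finset.sum_le_card_filter_mul_add_card_mul {ι : Type*} (S : Finset ι) (f : ι → ℝ)
    {C ε : ℝ} (hC : ∀ k ∈ S, f k ≤ C) (hε : 0 ≤ ε) :
    ∑ k ∈ S, f k ≤ #{k ∈ S | ε ≤ f k} * C + #S * ε := by
  rw [← sum_filter_add_sum_filter_not S (fun k => ε ≤ f k)]
  gcongr
  · simpa using sum_le_card_nsmul _ f C fun k hk => hC k (mem_filter.1 hk).1
  · calc ∑ k ∈ S with ¬ε ≤ f k, f k ≤ #{k ∈ S | ¬ε ≤ f k} * ε := by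
          simpa using sum_le_card_nsmul _ f ε fun k hk => (not_le.1 (mem_filter.1 hk).2).le
      _ ≤ #S * ε := by gcongr; exact filter_subset _ S

theorem cesaro_mean_le_density_mul_add (u : ℕ → ℝ) {C ε : ℝ} (hC : ∀ k, u k ≤ C)
    (hε : 0 ≤ ε) (n : ℕ) :
    (1 / (n : ℝ)) * ∑ k ∈ Icc 1 n, u k ≤ (#{k ∈ Icc 1 n | ε ≤ u k} / (n : ℝ)) * C + ε := by
  have hsum := (Icc 1 n).sum_le_card_filter_mul_add_card_mul u (fun k _ => hC k) hε
  rw [Nat.card_Icc, add_tsub_cancel_right] at hsum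
  calc (1 / (n : ℝ)) * ∑ k ∈ Icc 1 n, u k
      ≤ (1 / (n : ℝ)) * (#{k ∈ Icc 1 n | ε ≤ u k} * C + n * ε) := by gcongr
    _ = (#{k ∈ Icc 1 n | ε ≤ u k} / (n : ℝ)) * C + (n / n : ℝ) * ε := by ring
    _ ≤ (#{k ∈ Icc 1 n | ε ≤ u k} / (n : ℝ)) * C + ε := by
        gcongr; exact mul_le_of_le_one_left hε (div_self_le_one _)

theorem tendsto_cesaro_mean_zero_of_density_tendsto_zero (u : ℕ → ℝ) {C : ℝ}
    (h0 : ∀ k, 0 ≤ u k) (hC : ∀ k, u k ≤ C)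
    (hdens : ∀ ε > 0,
      Tendsto (fun n : ℕ => (#{k ∈ Icc 1 n | ε ≤ u k} : ℝ) / n) atTop (nhds 0)) :
    Tendsto (fun n : ℕ => (1 / (n : ℝ)) * ∑ k ∈ Icc 1 n, u k) atTop (nhds 0) := by
  refine tendsto_order.2 ⟨fun a ha => Eventually.of_forall fun n => ?_, fun a ha => ?_⟩
  · exact ha.trans_le (mul_nonneg (by positivity) (sum_nonneg fun k _ => h0 k))
  · have hsmall : ∀ᶠ n : ℕ in atTop, (#{k ∈ Icc 1 n | a / 2 ≤ u k} / (n : ℝ)) * C < a / 2 := by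
      have := (hdens (a / 2) (half_pos ha)).mul_const C
      rw [zero_mul] at this
      exact this.eventually_lt_const (half_pos ha)
    filter_upwards [hsmall] with n hn
    linarith [cesaro_mean_le_density_mul_add u hC (half_pos ha).le n]

/-- A bounded, statistically convergent real sequence is strongly p-Cesàro convergent
for every `p > 0`. -/
theorem statistical_implies_strong_cesaro (s : ℕ → ℝ) (t : ℝ)
    (R : ℝ) (hbdd : ∀ k, |s k| ≤ R)
    (hstat : ∀ ε > 0, Tendsto
      (fun n : ℕ =>
        (((Finset.Icc 1 n).filter (fun k => ε ≤ |s k - t|)).card : ℝ) / (n : ℝ))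
      atTop (nhds 0)) :
    ∀ p : ℝ, 0 < p →
      Tendsto (fun n : ℕ => (1 / (n : ℝ)) * ∑ k ∈ Finset.Icc 1 n, |s k - t| ^ p)
        atTop (nhds 0) := by
  intro p hp
  have hbound : ∀ k, |s k - t| ^ p ≤ (R + |t|) ^ p := fun k =>
    Real.rpow_le_rpow (abs_nonneg _) ((abs_sub _ _).trans (by linarith [hbdd k])) hp.le
  refine tendsto_cesaro_mean_zero_of_density_tendsto_zero _
    (fun k => Real.rpow_nonneg (abs_nonneg _) p) hbound fun ε hε => ?_
  have hlevel : ∀ k, ε ≤ |s k - t| ^ p ↔ ε ^ p⁻¹ ≤ |s k - t| := fun k =>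
    (Real.rpow_inv_le_iff_of_pos hε.le (abs_nonneg _) hp).symm
  simpa only [hlevel] using hstat _ (Real.rpow_pos_of_pos hε _)
end

section
/- For a bounded sequence of real numbers and any two exponents p, q > 0, strong p-Cesàro convergence to s is equivalent to strong q-Cesàro convergence to s. -/
/-!
On `[0, M]` the function `a ↦ a ^ q` is dominated by `η + C a ^ p` for every `η > 0` and a
suitable constant `C = C(η)`: below `δ = η ^ (1 / q)` the first term suffices, above `δ` the
second does, since there `a ^ p ≥ δ ^ p`. Averaging this bound along the sequence
`|s k - t|` and letting first `n → ∞` and then `η → 0` shows that strong `p`-Cesàro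
convergence implies strong `q`-Cesàro convergence; the converse is the same argument with
`p` and `q` exchanged.
-/

open Filter Topology

noncomputable def cesaroMean (f : ℕ → ℝ) (n : ℕ) : ℝ :=
  (1 / (n : ℝ)) * ∑ k ∈ Finset.Icc 1 n, f k

lemma cesaroMean_nonneg {f : ℕ → ℝ} (hf : ∀ k, 0 ≤ f k) (n : ℕ) : 0 ≤ cesaroMean f n :=
  mul_nonneg (by positivity) (Finset.sum_nonneg fun k _ => hf k)

lemma cesaroMean_mono {f g : ℕ → ℝ} (h : ∀ k, f k ≤ g k) (n : ℕ) :
    cesaroMean f n ≤ cesaroMean g n :=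
  mul_le_mul_of_nonneg_left (Finset.sum_le_sum fun k _ => h k) (by positivity)

lemma cesaroMean_const_add_mul (c C : ℝ) (f : ℕ → ℝ) {n : ℕ} (hn : n ≠ 0) :
    cesaroMean (fun k => c + C * f k) n = c + C * cesaroMean f n := by
  simp only [cesaroMean, Finset.sum_add_distrib, Finset.sum_const, Nat.card_Icc,
    add_tsub_cancel_right, nsmul_eq_mul, ← Finset.mul_sum]
  field_simp

lemma exists_rpow_le_add_mul_rpow {M p q η : ℝ} (hp : 0 ≤ p) (hq : 0 < q) (hη : 0 < η) :
    ∃ C, ∀ a, 0 ≤ a → a ≤ M → a ^ q ≤ η + C * a ^ p := by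
  set δ := η ^ (1 / q) with hδ_def
  have hδ : 0 < δ := Real.rpow_pos_of_pos hη _
  have hδq : δ ^ q = η := by rw [hδ_def, one_div, Real.rpow_inv_rpow hη.le hq.ne']
  refine ⟨M ^ q / δ ^ p, fun a ha haM => ?_⟩
  have hMq : 0 ≤ M ^ q := Real.rpow_nonneg (ha.trans haM) q
  rcases le_or_gt a δ with hle | hlt
  · have hsmall : a ^ q ≤ η := hδq ▸ Real.rpow_le_rpow ha hle hq.le
    have : 0 ≤ M ^ q / δ ^ p * a ^ p := by positivity
    linarith
  · have hlarge : M ^ q ≤ M ^ q / δ ^ p * a ^ p := by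
      rw [div_mul_eq_mul_div, le_div_iff₀ (by positivity)]
      exact mul_le_mul_of_nonneg_left (Real.rpow_le_rpow hδ.le hlt.le hp) hMq
    linarith [Real.rpow_le_rpow ha haM hq.le]

theorem tendsto_cesaroMean_rpow_of_tendsto {a : ℕ → ℝ} {M p q : ℝ} (ha : ∀ k, 0 ≤ a k)
    (haM : ∀ k, a k ≤ M) (hp : 0 ≤ p) (hq : 0 < q)
    (h : Tendsto (cesaroMean fun k => a k ^ p) atTop (𝓝 0)) :
    Tendsto (cesaroMean fun k => a k ^ q) atTop (𝓝 0) := by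
  refine tendsto_order.2 ⟨fun ε hε => Eventually.of_forall fun n =>
    hε.trans_le (cesaroMean_nonneg (fun k => Real.rpow_nonneg (ha k) q) n), fun ε hε => ?_⟩
  obtain ⟨C, hC⟩ := exists_rpow_le_add_mul_rpow (M := M) hp hq (half_pos hε)
  have hbound : Tendsto (fun n => ε / 2 + C * cesaroMean (fun k => a k ^ p) n) atTop
      (𝓝 (ε / 2)) := by
    simpa using tendsto_const_nhds.add (h.const_mul C)
  filter_upwards [hbound.eventually_lt_const (half_lt_self hε), eventually_ne_atTop 0]
    with n hn hn0
  calc cesaroMean (fun k => a k ^ q) n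
      ≤ cesaroMean (fun k => ε / 2 + C * a k ^ p) n :=
        cesaroMean_mono (fun k => hC _ (ha k) (haM k)) n
    _ = ε / 2 + C * cesaroMean (fun k => a k ^ p) n := cesaroMean_const_add_mul _ _ _ hn0
    _ < ε := hn

/-- For a bounded real sequence, strong p-Cesàro convergence and strong q-Cesàro
convergence (to the same limit) are equivalent, for any `p, q > 0`. -/
theorem strong_cesaro_equiv (s : ℕ → ℝ) (t : ℝ) (R : ℝ) (hbdd : ∀ k, |s k| ≤ R)
    (p q : ℝ) (hp : 0 < p) (hq : 0 < q) :
    Tendsto (fun n : ℕ => (1 / (n : ℝ)) * ∑ k ∈ Finset.Icc 1 n, |s k - t| ^ p)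
        atTop (nhds 0) ↔
      Tendsto (fun n : ℕ => (1 / (n : ℝ)) * ∑ k ∈ Finset.Icc 1 n, |s k - t| ^ q)
        atTop (nhds 0) := by
  have hbound : ∀ k, |s k - t| ≤ R + |t| := fun k => (abs_sub _ _).trans (by linarith [hbdd k])
  exact ⟨tendsto_cesaroMean_rpow_of_tendsto (fun k => abs_nonneg _) hbound hp.le hq,
    tendsto_cesaroMean_rpow_of_tendsto (fun k => abs_nonneg _) hbound hq.le hp⟩
end

section
/- If a bounded sequence of real numbers (s_k) is statistically pre-Cauchy, then lim_{n→∞} (1/n²)·∑_{i,j ≤ n} |s_i − s_j| = 0. -/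
/-!
Split the pairs `(i, j)` according to whether `|s i - s j| ≥ ε`. The far pairs contribute at
most `2R` each and have vanishing density, the near pairs contribute less than `ε` each, so the
averaged sum is eventually below `2R · o(1) + ε` for every `ε > 0`.
-/

open Filter Topology Finset

theorem Finset.sum_le_mul_card_filter_add_mul_card {ι : Type*} (P : Finset ι) (f : ι → ℝ)
    {M ε : ℝ} (hε : 0 ≤ ε) (hM : ∀ x ∈ P, f x ≤ M) :
    ∑ x ∈ P, f x ≤ M * #{x ∈ P | ε ≤ f x} + ε * #P := by
  rw [← sum_filter_add_sum_filter_not P (fun x => ε ≤ f x)]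
  have hlarge : ∑ x ∈ P with ε ≤ f x, f x ≤ M * #{x ∈ P | ε ≤ f x} := by
    simpa [mul_comm] using sum_le_card_nsmul _ _ M fun x hx => hM x (mem_filter.1 hx).1
  have hsmall : ∑ x ∈ P with ¬ε ≤ f x, f x ≤ ε * #P :=
    calc ∑ x ∈ P with ¬ε ≤ f x, f x ≤ #{x ∈ P | ¬ε ≤ f x} • ε :=
          sum_le_card_nsmul _ _ ε fun x hx => (not_le.1 (mem_filter.1 hx).2).le
      _ ≤ ε * #P := by
          rw [nsmul_eq_mul, mul_comm]
          gcongr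
          exact filter_subset _ _
  linarith

theorem Finset.inv_sq_card_mul_sum_sum_le {ι : Type*} (S : Finset ι) (f : ι → ι → ℝ)
    {M ε : ℝ} (hε : 0 ≤ ε) (hM : ∀ i ∈ S, ∀ j ∈ S, f i j ≤ M) :
    1 / (#S : ℝ) ^ 2 * ∑ i ∈ S, ∑ j ∈ S, f i j
      ≤ M * (#{p ∈ S ×ˢ S | ε ≤ f p.1 p.2} / (#S : ℝ) ^ 2) + ε := by
  have hsum := (S ×ˢ S).sum_le_mul_card_filter_add_mul_card (fun p => f p.1 p.2) hε
    fun p hp => hM _ (mem_product.1 hp).1 _ (mem_product.1 hp).2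
  rw [sum_product, card_product, Nat.cast_mul, ← sq] at hsum
  calc 1 / (#S : ℝ) ^ 2 * ∑ i ∈ S, ∑ j ∈ S, f i j
      ≤ 1 / (#S : ℝ) ^ 2 * (M * #{p ∈ S ×ˢ S | ε ≤ f p.1 p.2} + ε * (#S : ℝ) ^ 2) := by
        gcongr
    _ = M * (#{p ∈ S ×ˢ S | ε ≤ f p.1 p.2} / (#S : ℝ) ^ 2) + ε * ((#S : ℝ) ^ 2 / (#S : ℝ) ^ 2) := by
        ring
    _ ≤ _ := by
        gcongr
        exact mul_le_of_le_one_right hε (div_self_le_one _)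

theorem tendsto_zero_of_forall_le_add {α : Type*} {l : Filter α} {a : α → ℝ} (ha : ∀ x, 0 ≤ a x)
    (h : ∀ ε > 0, ∃ b : α → ℝ, Tendsto b l (𝓝 0) ∧ ∀ᶠ x in l, a x ≤ b x + ε) :
    Tendsto a l (𝓝 0) := by
  refine tendsto_order.2 ⟨fun c hc => .of_forall fun x => hc.trans_le (ha x), fun c hc => ?_⟩
  obtain ⟨b, hb, hab⟩ := h (c / 2) (half_pos hc)
  filter_upwards [hab, hb.eventually (gt_mem_nhds (half_pos hc))] with x hax hbx
  linarith

/-- If a bounded real sequence is statistically pre-Cauchy, then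
`(1/n²)·∑_{i,j ≤ n} |s_i − s_j| → 0`. -/
theorem stat_pre_cauchy_implies_sum_condition (s : ℕ → ℝ)
    (R : ℝ) (hbdd : ∀ k, |s k| ≤ R)
    (h : ∀ ε > 0, Tendsto
      (fun n : ℕ =>
        ((((Finset.Icc 1 n) ×ˢ (Finset.Icc 1 n)).filter
          (fun ij => ε ≤ |s ij.1 - s ij.2|)).card : ℝ) / (n : ℝ) ^ 2)
      atTop (nhds 0)) :
    Tendsto
      (fun n : ℕ =>
        (1 / (n : ℝ) ^ 2) * ∑ i ∈ Finset.Icc 1 n, ∑ j ∈ Finset.Icc 1 n, |s i - s j|)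
      atTop (nhds 0) := by
  have hdiam : ∀ i j, |s i - s j| ≤ 2 * R := fun i j =>
    (abs_sub _ _).trans (by linarith [hbdd i, hbdd j])
  refine tendsto_zero_of_forall_le_add (fun n => by positivity) fun ε hε =>
    ⟨_, by simpa using (h ε hε).const_mul (2 * R), .of_forall fun n => ?_⟩
  simpa using (Icc 1 n).inv_sq_card_mul_sum_sum_le (fun i j => |s i - s j|) hε.le
    fun i _ j _ => hdiam i j
end

section
/- Every statistically convergent sequence of real numbers is statistically pre-Cauchy. -/
/-!
If `|s i - s j| ≥ ε` then `s i` or `s j` lies at distance at least `ε / 2` from the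
statistical limit `t`. So with `A n` the indices `k ≤ n` where `|s k - t| ≥ ε / 2`, the bad
pairs `(i, j)` lie in `A n × [1, n] ∪ [1, n] × A n`, which has at most `2 n · #(A n)` elements,
and their density among the `n²` pairs is at most `2 · #(A n) / n → 0`.
-/

open Filter

theorem Finset.card_filter_product_le_of_imp {ι : Type*} [DecidableEq ι] (I : Finset ι)
    (P : ι × ι → Prop) [DecidablePred P] (Q : ι → Prop) [DecidablePred Q]
    (hPQ : ∀ i j, P (i, j) → Q i ∨ Q j) :
    ((I ×ˢ I).filter P).card ≤ 2 * (I.filter Q).card * I.card := by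
  have hsub : (I ×ˢ I).filter P ⊆ (I.filter Q ×ˢ I) ∪ (I ×ˢ I.filter Q) := by
    rintro ⟨i, j⟩ hij
    simp only [Finset.mem_filter, Finset.mem_product] at hij
    obtain ⟨⟨hi, hj⟩, hP⟩ := hij
    rcases hPQ i j hP with hQ | hQ <;> simp [hi, hj, hQ]
  calc ((I ×ˢ I).filter P).card
      ≤ ((I.filter Q ×ˢ I) ∪ (I ×ˢ I.filter Q)).card := Finset.card_le_card hsub
    _ ≤ (I.filter Q ×ˢ I).card + (I ×ˢ I.filter Q).card := Finset.card_union_le _ _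
    _ = 2 * (I.filter Q).card * I.card := by simp only [Finset.card_product]; ring

theorem half_le_dist_or_half_le_dist_of_le_dist {α : Type*} [PseudoMetricSpace α] {x y : α}
    (t : α) {ε : ℝ} (h : ε ≤ dist x y) : ε / 2 ≤ dist x t ∨ ε / 2 ≤ dist y t := by
  by_contra! hlt
  linarith [dist_triangle_right x y t]

theorem div_sq_le_div_of_le_mul {a c x : ℝ} (hx : 0 ≤ x) (h : c ≤ a * x) :
    c / x ^ 2 ≤ a / x := by
  rcases hx.eq_or_lt with rfl | hx
  · simp
  · rw [div_le_div_iff₀ (by positivity) hx, sq, ← mul_assoc]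
    exact mul_le_mul_of_nonneg_right h hx.le

/-- Every statistically convergent real sequence is statistically pre-Cauchy. -/
theorem statistical_convergent_implies_stat_pre_cauchy (s : ℕ → ℝ) (t : ℝ)
    (hstat : ∀ ε > 0, Tendsto
      (fun n : ℕ =>
        (((Finset.Icc 1 n).filter (fun k => ε ≤ |s k - t|)).card : ℝ) / (n : ℝ))
      atTop (nhds 0)) :
    ∀ ε > 0, Tendsto
      (fun n : ℕ =>
        ((((Finset.Icc 1 n) ×ˢ (Finset.Icc 1 n)).filter
          (fun ij => ε ≤ |s ij.1 - s ij.2|)).card : ℝ) / (n : ℝ) ^ 2)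
      atTop (nhds 0) := by
  intro ε hε
  have hcard : ∀ n : ℕ, ((((Finset.Icc 1 n) ×ˢ (Finset.Icc 1 n)).filter
      (fun ij => ε ≤ |s ij.1 - s ij.2|)).card : ℝ) ≤
        2 * ((Finset.Icc 1 n).filter (fun k => ε / 2 ≤ |s k - t|)).card * n := by
    intro n
    have h := (Finset.Icc 1 n).card_filter_product_le_of_imp (fun ij => ε ≤ |s ij.1 - s ij.2|)
        (fun k => ε / 2 ≤ |s k - t|) fun i j hij => by
      simpa only [Real.dist_eq] using half_le_dist_or_half_le_dist_of_le_dist (x := s i) t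
        (by simpa only [Real.dist_eq] using hij)
    rw [Nat.card_Icc, Nat.add_sub_cancel] at h
    exact_mod_cast h
  refine squeeze_zero (fun n => by positivity) (fun n => ?_)
    (by simpa using (hstat (ε / 2) (half_pos hε)).const_mul 2)
  rw [← mul_div_assoc]
  exact div_sq_le_div_of_le_mul n.cast_nonneg (hcard n)
end

section
/- Let A = (a_{nk}) be a positive regular summability matrix and (s_k) a sequence of non-negative reals that is A-convergent to 0 (i.e., ∑_k a_{nk} s_k converges for each n and tends to 0 as n → ∞). Then 0 is a cluster point of (s_k), i.e., for every ε > 0 and N there exists k ≥ N with s_k < ε. -/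
open Filter Topology Finset

/-!
Suppose `ε ≤ s k` for all `k ≥ N`. Removing finitely many columns changes neither the row sums of
`A` nor its transform of `s` in the limit, because each column tends to `0`. Comparing the tails
from `N` on, `ε ∑_{k ≥ N} a_{nk} ≤ ∑_{k ≥ N} a_{nk} s_k` then gives `ε ≤ 0` in the limit.
-/

theorem tendsto_tsum_nat_add_of_tendsto_zero {G ι : Type*} [AddCommGroup G] [TopologicalSpace G]
    [IsTopologicalAddGroup G] [T2Space G] {l : Filter ι} {f : ι → ℕ → G} {c : G}
    (hf : ∀ i, Summable (f i)) (hcol : ∀ k, Tendsto (fun i => f i k) l (𝓝 0))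
    (hsum : Tendsto (fun i => ∑' k, f i k) l (𝓝 c)) (N : ℕ) :
    Tendsto (fun i => ∑' k, f i (k + N)) l (𝓝 c) := by
  have htail : ∀ i, ∑' k, f i (k + N) = ∑' k, f i k - ∑ k ∈ range N, f i k := fun i => by
    rw [← (hf i).sum_add_tsum_nat_add N, add_sub_cancel_left]
  have hhead : Tendsto (fun i => ∑ k ∈ range N, f i k) l (𝓝 0) := by
    simpa using tendsto_finsetSum (range N) fun k _ => hcol k
  simp_rw [htail]
  simpa using hsum.sub hhead

theorem mul_tsum_le_tsum_mul_of_le {β : Type*} {a s : β → ℝ} {ε : ℝ} (ha : ∀ k, 0 ≤ a k)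
    (hs : ∀ k, ε ≤ s k) (ha_sum : Summable a) (has_sum : Summable fun k => a k * s k) :
    ε * ∑' k, a k ≤ ∑' k, a k * s k := by
  rw [← tsum_mul_left]
  exact (ha_sum.mul_left ε).tsum_le_tsum
    (fun k => by rw [mul_comm]; exact mul_le_mul_of_nonneg_left (hs k) (ha k)) has_sum

theorem zero_cluster_point_of_A_convergent_general (a : ℕ → ℕ → ℝ) (s : ℕ → ℝ)
    (hpos : ∀ n k, 0 ≤ a n k)
    (hsummable : ∀ n, Summable fun k => |a n k|)
    (hrow : Tendsto (fun n => ∑' k, a n k) atTop (nhds 1))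
    (hcol : ∀ k, Tendsto (fun n => a n k) atTop (nhds 0))
    (hAsummable : ∀ n, Summable fun k => a n k * s k)
    (hAlim : Tendsto (fun n => ∑' k, a n k * s k) atTop (nhds 0)) :
    ∀ ε > 0, ∀ N : ℕ, ∃ k ≥ N, s k < ε := by
  intro ε hε N
  by_contra! hlarge
  have hAcol : ∀ k, Tendsto (fun n => a n k * s k) atTop (𝓝 0) := fun k => by
    simpa using (hcol k).mul_const (s k)
  have hrow_tail := (tendsto_tsum_nat_add_of_tendsto_zero (fun n => (hsummable n).of_abs)
    hcol hrow N).const_mul ε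
  have hA_tail := tendsto_tsum_nat_add_of_tendsto_zero hAsummable hAcol hAlim N
  have hbound : ∀ n, ε * ∑' k, a n (k + N) ≤ ∑' k, a n (k + N) * s (k + N) := fun n =>
    mul_tsum_le_tsum_mul_of_le (fun k => hpos n _) (fun k => hlarge _ (Nat.le_add_left N k))
      ((summable_nat_add_iff N).2 (hsummable n).of_abs) ((summable_nat_add_iff N).2 (hAsummable n))
  have : ε * 1 ≤ 0 := le_of_tendsto_of_tendsto' hrow_tail hA_tail hbound
  linarith

/-- If `A` is a positive regular summability matrix and `(s_k)` is a sequence of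
non-negative reals that is `A`-convergent to `0`, then `0` is a cluster point
of `(s_k)`. -/
theorem zero_cluster_point_of_A_convergent (a : ℕ → ℕ → ℝ) (s : ℕ → ℝ)
    (hpos : ∀ n k, 0 ≤ a n k)
    (hsummable : ∀ n, Summable fun k => |a n k|)
    (hbdd : ∃ C : ℝ, ∀ n, ∑' k, |a n k| ≤ C)
    (hrow : Tendsto (fun n => ∑' k, a n k) atTop (nhds 1))
    (hcol : ∀ k, Tendsto (fun n => a n k) atTop (nhds 0))
    (hs : ∀ k, 0 ≤ s k)
    (hAsummable : ∀ n, Summable fun k => a n k * s k)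
    (hAlim : Tendsto (fun n => ∑' k, a n k * s k) atTop (nhds 0)) :
    ∀ ε > 0, ∀ N : ℕ, ∃ k ≥ N, s k < ε :=
  zero_cluster_point_of_A_convergent_general a s hpos hsummable hrow hcol hAsummable hAlim
end

section
/- Let X be a real Banach space, K ⊆ X* weak*-compact and convex, and B ⊆ K a boundary for K (for every x ∈ X there is b ∈ B with b(x) = sup_{x*∈K} x*(x)). Then for every bounded sequence (x_n) in X: sup_{x*∈K} limsup_n x*(x_n) = sup_{x*∈B} limsup_n x*(x_n). -/
/-!
Let `S y = sup_{g ∈ K} g y` and fix `f ∈ K`. Along a subsequence `(z_k)` of `(x_n)` we have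
`f z_k > limsup f(x_n) - ε`, hence `S ≥ limsup f(x_n) - ε` on the closed convex hull of `(z_k)`.
Choose greedily `Y_k ∈ W_k`, the closed convex hull of `{z_j : j ≥ k}`, such that
`S (∑_{i<k} 2^{-(i+1)} Y_i + 2^{-k} Y_k)` is almost minimal among all choices in `W_k`, and put
`w = ∑ 2^{-(i+1)} Y_i`. The tails `w_k = ∑_i 2^{-(i+1)} Y_{k+i}` lie in `W_k` and satisfy
`w = ∑_{i<k} 2^{-(i+1)} Y_i + 2^{-k} w_k`, so almost-minimality says that a functional `b ∈ B`
attaining `S` at `w` satisfies `b w_k > S w - ε` for every `k`. As `w_k ∈ W_k`, the bound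
`b z_j ≤ S w - ε` cannot hold for all `j ≥ k`; hence `limsup b(x_n) ≥ limsup f(x_n) - 2ε`.
-/

open Filter NormedSpace

theorem Convex.tsum_mem {E : Type*} [AddCommGroup E] [Module ℝ E] [TopologicalSpace E]
    [ContinuousAdd E] [ContinuousSMul ℝ E] {C : Set E} (hC : Convex ℝ C) (hCc : IsClosed C)
    {a : ℕ → ℝ} (ha0 : ∀ i, 0 ≤ a i) (ha : HasSum a 1) {v : ℕ → E} (hv : ∀ i, v i ∈ C)
    (hav : Summable fun i => a i • v i) : ∑' i, a i • v i ∈ C := by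
  set s : ℕ → ℝ := fun N => ∑ i ∈ Finset.range N, a i
  have hs : Tendsto s atTop (nhds 1) := ha.tendsto_sum_nat
  have hmem : ∀ᶠ N in atTop, (s N)⁻¹ • ∑ i ∈ Finset.range N, a i • v i ∈ C := by
    filter_upwards [hs.eventually (lt_mem_nhds one_pos)] with N hN
    rw [Finset.smul_sum]
    simp_rw [smul_smul]
    refine hC.sum_mem (fun i _ => mul_nonneg (inv_nonneg.2 hN.le) (ha0 i)) ?_ (fun i _ => hv i)
    rw [← Finset.mul_sum, inv_mul_cancel₀ hN.ne']
  have hlim := (hs.inv₀ one_ne_zero).smul hav.hasSum.tendsto_sum_nat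
  rw [inv_one, one_smul] at hlim
  exact hCc.mem_of_tendsto hlim hmem

theorem Real.iSup_subtype_eq_of_forall_exists_sub_le {ι : Type*} {s t : Set ι} (g : ι → ℝ)
    (hts : t ⊆ s) (ht : t.Nonempty) (h : ∀ i ∈ s, ∀ ε > 0, ∃ j ∈ t, g i - ε ≤ g j) :
    ⨆ i : s, g i = ⨆ j : t, g j := by
  have : Nonempty t := ht.to_subtype
  have : Nonempty s := (ht.mono hts).to_subtype
  have hupper : ∀ M, (∀ j ∈ t, g j ≤ M) → ∀ i ∈ s, g i ≤ M := fun M hM i hi =>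
    le_of_forall_sub_le fun ε hε => by
      obtain ⟨j, hj, hij⟩ := h i hi ε hε
      exact hij.trans (hM j hj)
  by_cases hbdd : BddAbove (Set.range fun j : t => g j)
  · have hle : ∀ i ∈ s, g i ≤ ⨆ j : t, g j :=
      hupper _ fun j hj => le_ciSup hbdd (⟨j, hj⟩ : t)
    refine le_antisymm (ciSup_le fun i => hle i i.2) (ciSup_le fun j => ?_)
    exact le_ciSup (f := fun i : s => g i) ⟨_, by rintro _ ⟨i, rfl⟩; exact hle i i.2⟩ ⟨j, hts j.2⟩
  · have hbdd' : ¬BddAbove (Set.range fun i : s => g i) := by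
      rintro ⟨M, hM⟩
      exact hbdd ⟨M, by rintro _ ⟨j, rfl⟩; exact hM ⟨⟨j, hts j.2⟩, rfl⟩⟩
    rw [Real.iSup_of_not_bddAbove hbdd, Real.iSup_of_not_bddAbove hbdd']

theorem exists_mem_forall_le_add_of_bddBelow {α : Type*} (f : α → ℝ) {s : Set α}
    (hs : s.Nonempty) (hf : BddBelow (f '' s)) {η : ℝ} (hη : 0 < η) :
    ∃ y ∈ s, ∀ w ∈ s, f y ≤ f w + η := by
  obtain ⟨_, ⟨y, hy, rfl⟩, hlt⟩ := Real.lt_sInf_add_pos (hs.image f) hη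
  exact ⟨y, hy, fun w hw => hlt.le.trans (by gcongr; exact csInf_le hf ⟨w, hw, rfl⟩)⟩

section DyadicSeries

variable {X : Type*} [NormedAddCommGroup X] [NormedSpace ℝ X]

theorem hasSum_inv_two_pow_succ : HasSum (fun i : ℕ => (2⁻¹ : ℝ) ^ (i + 1)) 1 := by
  have h := (hasSum_geometric_of_lt_one (r := (2⁻¹ : ℝ)) (by norm_num) (by norm_num)).mul_left 2⁻¹
  rw [show (2⁻¹ : ℝ) * (1 - 2⁻¹)⁻¹ = 1 by norm_num] at h
  simpa only [pow_succ'] using h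

theorem summable_inv_two_pow_succ_smul [CompleteSpace X] {Y : ℕ → X} {R : ℝ}
    (hY : ∀ n, ‖Y n‖ ≤ R) : Summable fun i => (2⁻¹ : ℝ) ^ (i + 1) • Y i :=
  hasSum_inv_two_pow_succ.summable.mul_right R |>.of_norm_bounded fun i => by
    rw [norm_smul, norm_pow, norm_inv, Real.norm_two]
    exact mul_le_mul_of_nonneg_left (hY i) (by positivity)

noncomputable def dyadicTail (Y : ℕ → X) (k : ℕ) : X :=
  ∑' i, (2⁻¹ : ℝ) ^ (i + 1) • Y (k + i)

variable [CompleteSpace X] {Y : ℕ → X} {R : ℝ}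

theorem dyadicTail_eq (hY : ∀ n, ‖Y n‖ ≤ R) (k : ℕ) :
    dyadicTail Y k = (2⁻¹ : ℝ) • Y k + (2⁻¹ : ℝ) • dyadicTail Y (k + 1) := by
  rw [dyadicTail, (summable_inv_two_pow_succ_smul fun i => hY (k + i)).tsum_eq_zero_add,
    dyadicTail, ← tsum_const_smul'']
  simp only [smul_smul, ← pow_succ', zero_add, add_zero, pow_one, add_assoc, add_comm 1]

theorem sum_add_dyadicTail (hY : ∀ n, ‖Y n‖ ≤ R) (k : ℕ) :
    ∑ i ∈ Finset.range k, (2⁻¹ : ℝ) ^ (i + 1) • Y i + (2⁻¹ : ℝ) ^ k • dyadicTail Y k =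
      dyadicTail Y 0 := by
  induction k with
  | zero => simp
  | succ k ih =>
    rw [← ih, dyadicTail_eq hY k, Finset.sum_range_succ, smul_add, smul_smul, smul_smul,
      ← pow_succ, add_assoc]

theorem dyadicTail_mem {C : ℕ → Set X} (hC : ∀ k, Convex ℝ (C k)) (hCc : ∀ k, IsClosed (C k))
    (hanti : Antitone C) (hYC : ∀ k, Y k ∈ C k) (hY : ∀ n, ‖Y n‖ ≤ R) (k : ℕ) :
    dyadicTail Y k ∈ C k :=
  (hC k).tsum_mem (hCc k) (fun _ => by positivity) hasSum_inv_two_pow_succ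
    (fun i => hanti (Nat.le_add_right k i) (hYC (k + i)))
    (summable_inv_two_pow_succ_smul fun i => hY (k + i))

end DyadicSeries

section Simons

variable {X : Type*} [NormedAddCommGroup X] [NormedSpace ℝ X] (S : X → ℝ)

theorem exists_seq_forall_le_add (hS : ∀ r, BddBelow (S '' Metric.closedBall 0 r))
    {W : ℕ → Set X} (hW : ∀ k, (W k).Nonempty) {R : ℝ} (hWR : ∀ k, W k ⊆ Metric.closedBall 0 R)
    {η : ℕ → ℝ} (hη : ∀ k, 0 < η k) :
    ∃ Y : ℕ → X, ∀ k, Y k ∈ W k ∧ ∀ w ∈ W k,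
      S (∑ i ∈ Finset.range k, (2⁻¹ : ℝ) ^ (i + 1) • Y i + (2⁻¹ : ℝ) ^ k • Y k) ≤
        S (∑ i ∈ Finset.range k, (2⁻¹ : ℝ) ^ (i + 1) • Y i + (2⁻¹ : ℝ) ^ k • w) + η k := by
  have hstep : ∀ k (u : X), ∃ y ∈ W k, ∀ w ∈ W k,
      S (u + (2⁻¹ : ℝ) ^ k • y) ≤ S (u + (2⁻¹ : ℝ) ^ k • w) + η k := by
    intro k u
    refine exists_mem_forall_le_add_of_bddBelow _ (hW k) ((hS (‖u‖ + R)).mono ?_) (hη k)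
    rintro _ ⟨w, hw, rfl⟩
    refine ⟨_, ?_, rfl⟩
    have hwR : ‖(2⁻¹ : ℝ) ^ k • w‖ ≤ R := by
      rw [norm_smul, norm_pow, norm_inv, Real.norm_two]
      exact (mul_le_of_le_one_left (norm_nonneg w) (pow_le_one₀ (by norm_num) (by norm_num))).trans
        (mem_closedBall_zero_iff.1 (hWR k hw))
    exact mem_closedBall_zero_iff.2 (norm_add_le_of_le le_rfl hwR)
  choose F hFW hFmin using hstep
  let u : ℕ → X := fun n => Nat.rec 0 (fun k v => v + (2⁻¹ : ℝ) ^ (k + 1) • F k v) n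
  have hu : ∀ k, u k = ∑ i ∈ Finset.range k, (2⁻¹ : ℝ) ^ (i + 1) • F i (u i) := by
    intro k
    induction k with
    | zero => rfl
    | succ k ih => rw [Finset.sum_range_succ, ← ih]
  exact ⟨fun k => F k (u k), fun k => ⟨hFW k (u k), by rw [← hu]; exact hFmin k (u k)⟩⟩

theorem sub_sum_le_apply_dyadicTail [CompleteSpace X] (b : X →ₗ[ℝ] ℝ) (hbS : ∀ y, b y ≤ S y)
    {Y : ℕ → X} {R : ℝ} (hY : ∀ n, ‖Y n‖ ≤ R) {δ : ℕ → ℝ}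
    (hmin : ∀ k, S (∑ i ∈ Finset.range k, (2⁻¹ : ℝ) ^ (i + 1) • Y i + (2⁻¹ : ℝ) ^ k • Y k) ≤
      S (∑ i ∈ Finset.range k, (2⁻¹ : ℝ) ^ (i + 1) • Y i + (2⁻¹ : ℝ) ^ k • dyadicTail Y k) +
        (2⁻¹ : ℝ) ^ k * δ k)
    (hb : b (dyadicTail Y 0) = S (dyadicTail Y 0)) (k : ℕ) :
    b (dyadicTail Y 0) - ∑ i ∈ Finset.range k, δ i ≤ b (dyadicTail Y k) := by
  induction k with
  | zero => simp
  | succ k ih =>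
    have hsplit := sum_add_dyadicTail hY k
    have hbY : b (Y k) - b (dyadicTail Y k) ≤ δ k := by
      have hk := (hbS _).trans (hmin k)
      rw [hsplit, ← hb, ← hsplit] at hk
      simp only [map_add, map_smul, smul_eq_mul] at hk
      have h2k : (0 : ℝ) < (2⁻¹ : ℝ) ^ k := by positivity
      nlinarith
    have hnext := congrArg b (dyadicTail_eq hY k)
    simp only [map_add, map_smul, smul_eq_mul] at hnext
    rw [Finset.sum_range_succ]
    linarith

theorem exists_mem_closedConvexHull_frequently_lt [CompleteSpace X]
    (hS : ∀ r, BddBelow (S '' Metric.closedBall 0 r)) {z : ℕ → X} {R : ℝ} (hz : ∀ n, ‖z n‖ ≤ R)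
    {ε : ℝ} (hε : 0 < ε) :
    ∃ w ∈ closedConvexHull ℝ (Set.range z), ∀ b : StrongDual ℝ X, (∀ y, b y ≤ S y) →
      b w = S w → ∃ᶠ n in atTop, S w - ε < b (z n) := by
  set W : ℕ → Set X := fun k => closedConvexHull ℝ (z '' Set.Ici k)
  have hWR : ∀ k, W k ⊆ Metric.closedBall 0 R := fun k =>
    closedConvexHull_min (by rintro _ ⟨j, -, rfl⟩; simpa using hz j)
      (convex_closedBall 0 R) Metric.isClosed_closedBall
  have hW : ∀ k, z k ∈ W k := fun k => subset_closedConvexHull ⟨k, Set.mem_Ici.2 le_rfl, rfl⟩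
  -- Tolerance `2⁻ᵏ δₖ` with `δₖ = ε/4 · 2⁻ᵏ`: `b` loses at most `δₖ` from one tail to the next,
  -- so at most `ε/2` in total.
  obtain ⟨Y, hY⟩ := exists_seq_forall_le_add S hS (fun k => ⟨_, hW k⟩) hWR
    (η := fun k => (2⁻¹ : ℝ) ^ k * (ε / 4 * (2⁻¹ : ℝ) ^ k)) fun k => by positivity
  have hYR : ∀ k, ‖Y k‖ ≤ R := fun k => mem_closedBall_zero_iff.1 (hWR k (hY k).1)
  have htail : ∀ k, dyadicTail Y k ∈ W k :=
    dyadicTail_mem (fun _ => convex_closedConvexHull) (fun _ => isClosed_closedConvexHull)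
      (fun k l hkl => (closedConvexHull ℝ).monotone (Set.image_mono (Set.Ici_subset_Ici.2 hkl)))
      (fun k => (hY k).1) hYR
  refine ⟨dyadicTail Y 0, by simpa [W] using htail 0, fun b hbS hb => ?_⟩
  have hdrop := sub_sum_le_apply_dyadicTail S b hbS hYR (fun k => (hY k).2 _ (htail k)) hb
  simp only [ContinuousLinearMap.coe_coe] at hdrop
  rw [frequently_atTop]
  intro N
  by_contra! hle
  have hWN : W N ⊆ {y | b y ≤ S (dyadicTail Y 0) - ε} :=
    closedConvexHull_min (by rintro _ ⟨j, hj, rfl⟩; exact hle j hj)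
      (convex_halfSpace_le b.isLinear _) (isClosed_le b.continuous continuous_const)
  have hsum : ∑ i ∈ Finset.range N, ε / 4 * (2⁻¹ : ℝ) ^ i ≤ ε / 2 := by
    rw [← Finset.mul_sum]
    have := sum_geometric_two_le N
    simp only [one_div] at this
    nlinarith
  have hbN : b (dyadicTail Y N) ≤ S (dyadicTail Y 0) - ε := hWN (htail N)
  linarith [hdrop N]

end Simons

section StrongDual

variable {X : Type*} [NormedAddCommGroup X] [NormedSpace ℝ X]

theorem bddAbove_range_apply_of_isCompact {K : Set (StrongDual ℝ X)}
    (hK : IsCompact (⇑StrongDual.toWeakDual '' K)) (y : X) :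
    BddAbove (Set.range fun g : K => (g : StrongDual ℝ X) y) := by
  have h := (hK.image (WeakDual.eval_continuous y)).bddAbove
  rwa [Set.image_image, Set.image_eq_range] at h

theorem bddBelow_image_closedBall_of_le {S : X → ℝ} (g : StrongDual ℝ X) (hg : ∀ y, g y ≤ S y)
    (r : ℝ) :
    BddBelow (S '' Metric.closedBall 0 r) := by
  refine ⟨-(‖g‖ * r), ?_⟩
  rintro _ ⟨y, hy, rfl⟩
  have hgy : |g y| ≤ ‖g‖ * ‖y‖ := g.le_opNorm y
  have hyr : ‖g‖ * ‖y‖ ≤ ‖g‖ * r := by gcongr; exact mem_closedBall_zero_iff.1 hy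
  linarith [neg_abs_le (g y), hg y]

theorem isBoundedUnder_abs_apply (g : StrongDual ℝ X) {x : ℕ → X} {R : ℝ} (hR : ∀ n, ‖x n‖ ≤ R) :
    IsBoundedUnder (· ≤ ·) atTop fun n => |g (x n)| :=
  isBoundedUnder_of ⟨‖g‖ * R, fun n => (g.le_opNorm (x n)).trans (by gcongr; exact hR n)⟩

end StrongDual

theorem simons_equality_general {X : Type*} [NormedAddCommGroup X] [NormedSpace ℝ X]
    [CompleteSpace X]
    (K : Set (StrongDual ℝ X)) (hKcomp : IsCompact (⇑StrongDual.toWeakDual '' K))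
    (B : Set (StrongDual ℝ X)) (hBK : B ⊆ K)
    (hBbd : ∀ y : X, ∃ b ∈ B, b y = ⨆ f : K, (f : StrongDual ℝ X) y)
    (x : ℕ → X) (R : ℝ) (hR : ∀ n, ‖x n‖ ≤ R) :
    (⨆ f : K, limsup (fun n => (f : StrongDual ℝ X) (x n)) atTop) =
      ⨆ f : B, limsup (fun n => (f : StrongDual ℝ X) (x n)) atTop := by
  obtain ⟨b₀, hb₀, -⟩ := hBbd 0
  refine Real.iSup_subtype_eq_of_forall_exists_sub_le
    (fun f : StrongDual ℝ X => limsup (fun n => f (x n)) atTop)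
    hBK ⟨b₀, hb₀⟩ fun f hf ε hε => ?_
  set S : X → ℝ := fun y => ⨆ g : K, (g : StrongDual ℝ X) y
  have hKS : ∀ g ∈ K, ∀ y, g y ≤ S y := fun g hg y =>
    le_ciSup (bddAbove_range_apply_of_isCompact hKcomp y) (⟨g, hg⟩ : K)
  obtain ⟨φ, hφ, hfφ⟩ := extraction_of_frequently_atTop <| frequently_lt_of_lt_limsup
    (isBoundedUnder_le_abs.1 (isBoundedUnder_abs_apply f hR)).2.isCoboundedUnder_le
    (sub_lt_self _ (half_pos hε))
  obtain ⟨w, hw, hwb⟩ := exists_mem_closedConvexHull_frequently_lt S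
    (bddBelow_image_closedBall_of_le f (hKS f hf)) (fun k => hR (φ k)) (half_pos hε)
  obtain ⟨b, hbB, hbw⟩ := hBbd w
  have hfw : limsup (fun n => f (x n)) atTop - ε / 2 ≤ f w :=
    closedConvexHull_min (t := {y | limsup (fun n => f (x n)) atTop - ε / 2 ≤ f y})
      (Set.range_subset_iff.2 fun k => (hfφ k).le)
      (convex_halfSpace_ge f.isLinear _) (isClosed_le continuous_const f.continuous) hw
  refine ⟨b, hbB, le_limsup_of_frequently_le ?_
    (isBoundedUnder_le_abs.1 (isBoundedUnder_abs_apply b hR)).1⟩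
  refine hφ.tendsto_atTop.frequently ((hwb b (hKS b (hBK hbB)) hbw).mono fun n hn => ?_)
  linarith [hKS f hf w]

/-- Simons' equality: if `B` is a boundary for the weak*-compact convex set
`K ⊆ X*`, then for every bounded sequence `(x_n)` in `X`,
`sup_{f ∈ K} limsup f(x_n) = sup_{f ∈ B} limsup f(x_n)`. -/
theorem simons_equality {X : Type*} [NormedAddCommGroup X] [NormedSpace ℝ X]
    [CompleteSpace X]
    (K : Set (StrongDual ℝ X)) (hKcomp : IsCompact (⇑StrongDual.toWeakDual '' K))
    (hKconv : Convex ℝ K)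
    (B : Set (StrongDual ℝ X)) (hBK : B ⊆ K)
    (hBbd : ∀ y : X, ∃ b ∈ B, b y = ⨆ f : K, (f : StrongDual ℝ X) y)
    (x : ℕ → X) (R : ℝ) (hR : ∀ n, ‖x n‖ ≤ R) :
    (⨆ f : K, limsup (fun n => (f : StrongDual ℝ X) (x n)) atTop) =
      ⨆ f : B, limsup (fun n => (f : StrongDual ℝ X) (x n)) atTop :=
  simons_equality_general K hKcomp B hBK hBbd x R hR
end

section
/- If K ⊆ X* is weak*-compact convex and B ⊆ K is norm-separable and (I)-generates K, then K equals the norm-closed convex hull of B. -/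
/-!
By separability, for every `δ > 0` the set `B` is covered by countably many norm-closed balls of
radius `δ`. Norm-closed balls of `X*` are weak*-closed and convex, so the weak*-closed convex hull
of each piece `B ∩ closedBall xₙ δ` stays within `2δ` of `B`; (I)-generation then puts `K` inside
the closed `2δ`-neighbourhood of the norm-closed convex hull of `B`, and `δ → 0` gives
`K ⊆ closure (convexHull ℝ B)`. The reverse inclusion is (I)-generation for the trivial
decomposition `B = ⋃ₙ B`.
-/

open Filter NormedSpace

/-- The weak*-closed convex hull of a set of functionals. -/
noncomputable def wstarClConvHull {X : Type*} [NormedAddCommGroup X] [NormedSpace ℝ X]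
    (S : Set (StrongDual ℝ X)) : Set (StrongDual ℝ X) :=
  ⇑StrongDual.toWeakDual ⁻¹' closure (convexHull ℝ (⇑StrongDual.toWeakDual '' S))

/-- `B` (I)-generates `K` if, whenever `B` is written as a countable union
`B = ⋃ₙ Bₙ`, `K` is the norm-closed convex hull of the union of the
weak*-closed convex hulls of the `Bₙ`. -/
def IGenerates {X : Type*} [NormedAddCommGroup X] [NormedSpace ℝ X]
    (B K : Set (StrongDual ℝ X)) : Prop :=
  ∀ Bn : ℕ → Set (StrongDual ℝ X), B = ⋃ n, Bn n →
    K = closure (convexHull ℝ (⋃ n, wstarClConvHull (Bn n)))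

open Metric Set

theorem TopologicalSpace.IsSeparable.exists_subset_iUnion_closedBall {α : Type*}
    [PseudoMetricSpace α] [Nonempty α] {s : Set α} (hs : IsSeparable s) {δ : ℝ} (hδ : 0 < δ) :
    ∃ x : ℕ → α, s ⊆ ⋃ n, closedBall (x n) δ := by
  obtain ⟨c, hc, hsc⟩ := hs
  obtain ⟨a⟩ := ‹Nonempty α›
  -- `a` is added only to make the dense set nonempty, so that it can be enumerated by `ℕ`
  obtain ⟨x, hx⟩ := (hc.insert a).exists_eq_range (insert_nonempty a c)
  refine ⟨x, fun y hy => ?_⟩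
  obtain ⟨z, hzc, hyz⟩ := mem_closure_iff.1 (hsc hy) δ hδ
  obtain ⟨n, rfl⟩ : z ∈ range x := hx ▸ subset_insert a c hzc
  exact mem_iUnion.2 ⟨n, mem_closedBall.2 hyz.le⟩

section WeakStar

variable {X : Type*} [NormedAddCommGroup X] [NormedSpace ℝ X]

theorem subset_wstarClConvHull (S : Set (StrongDual ℝ X)) : S ⊆ wstarClConvHull S :=
  fun s hs => show StrongDual.toWeakDual s ∈ closure _ from
    subset_closure (subset_convexHull ℝ _ (mem_image_of_mem _ hs))

theorem wstarClConvHull_empty : wstarClConvHull (∅ : Set (StrongDual ℝ X)) = ∅ := by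
  simp [wstarClConvHull]

theorem wstarClConvHull_subset_closedBall {S : Set (StrongDual ℝ X)} {x : StrongDual ℝ X}
    {r : ℝ} (hS : S ⊆ closedBall x r) : wstarClConvHull S ⊆ closedBall x r := by
  have hconv : Convex ℝ (WeakDual.toStrongDual ⁻¹' closedBall x r : Set (WeakDual ℝ X)) :=
    (convex_closedBall x r).linear_preimage WeakDual.toStrongDual.toLinearMap
  have himage : StrongDual.toWeakDual '' S ⊆ WeakDual.toStrongDual ⁻¹' closedBall x r := by
    rintro _ ⟨s, hs, rfl⟩
    exact hS hs
  exact fun f hf => closure_minimal (convexHull_min himage hconv)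
    (WeakDual.isClosed_closedBall x r) hf

theorem wstarClConvHull_subset_cthickening {S : Set (StrongDual ℝ X)} {x : StrongDual ℝ X}
    {r : ℝ} (hS : S ⊆ closedBall x r) : wstarClConvHull S ⊆ cthickening (2 * r) S := by
  rcases S.eq_empty_or_nonempty with rfl | ⟨b, hb⟩
  · simp [wstarClConvHull_empty]
  have hxb : r + dist x b ≤ 2 * r := by
    linarith [mem_closedBall'.1 (hS hb)]
  exact (wstarClConvHull_subset_closedBall hS).trans <|
    (closedBall_subset_closedBall' hxb).trans (closedBall_subset_cthickening hb _)

end WeakStar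

namespace IGenerates

variable {X : Type*} [NormedAddCommGroup X] [NormedSpace ℝ X] {B K : Set (StrongDual ℝ X)}

theorem closure_convexHull_subset (hI : IGenerates B K) : closure (convexHull ℝ B) ⊆ K := by
  rw [hI (fun _ => B) (iUnion_const B).symm]
  exact closure_mono <| convexHull_mono <|
    (subset_wstarClConvHull B).trans (subset_iUnion (fun _ : ℕ => wstarClConvHull B) 0)

theorem subset_cthickening_closure_convexHull (hI : IGenerates B K) {δ : ℝ}
    {x : ℕ → StrongDual ℝ X} (hB : B ⊆ ⋃ n, closedBall (x n) δ) :
    K ⊆ cthickening (2 * δ) (closure (convexHull ℝ B)) := by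
  have hcover : B = ⋃ n, B ∩ closedBall (x n) δ := by
    rw [← inter_iUnion, inter_eq_left.2 hB]
  have hpiece (n : ℕ) : wstarClConvHull (B ∩ closedBall (x n) δ) ⊆
      cthickening (2 * δ) (closure (convexHull ℝ B)) :=
    (wstarClConvHull_subset_cthickening inter_subset_right).trans <|
      cthickening_subset_of_subset _ <|
        inter_subset_left.trans ((subset_convexHull ℝ B).trans subset_closure)
  rw [hI _ hcover]
  exact closure_minimal
    (convexHull_min (iUnion_subset hpiece) ((convex_convexHull ℝ B).closure.cthickening _))
    isClosed_cthickening

theorem subset_closure_convexHull (hI : IGenerates B K) (hsep : TopologicalSpace.IsSeparable B) :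
    K ⊆ closure (convexHull ℝ B) := by
  rw [← closure_closure, closure_eq_iInter_cthickening]
  refine fun f hf => mem_iInter₂.2 fun δ hδ => ?_
  obtain ⟨x, hx⟩ := hsep.exists_subset_iUnion_closedBall (half_pos hδ)
  simpa only [mul_div_cancel₀ δ two_ne_zero] using hI.subset_cthickening_closure_convexHull hx hf

end IGenerates

theorem separable_IGenerating_closure_general {X : Type*} [NormedAddCommGroup X]
    [NormedSpace ℝ X]
    (K : Set (StrongDual ℝ X))
    (B : Set (StrongDual ℝ X))
    (hsep : TopologicalSpace.IsSeparable B)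
    (hI : IGenerates B K) :
    K = closure (convexHull ℝ B) :=
  (hI.subset_closure_convexHull hsep).antisymm hI.closure_convexHull_subset

/-- If a norm-separable subset `B` of a weak*-compact convex set `K`
(I)-generates `K`, then `K` is the norm-closed convex hull of `B`. -/
theorem separable_IGenerating_closure {X : Type*} [NormedAddCommGroup X]
    [NormedSpace ℝ X] [CompleteSpace X]
    (K : Set (StrongDual ℝ X)) (hKcomp : IsCompact (⇑StrongDual.toWeakDual '' K))
    (hKconv : Convex ℝ K)
    (B : Set (StrongDual ℝ X)) (hBK : B ⊆ K)
    (hsep : TopologicalSpace.IsSeparable B)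
    (hI : IGenerates B K) :
    K = closure (convexHull ℝ B) :=
  separable_IGenerating_closure_general K B hsep hI
end

section
/- A subset B of a weak*-compact convex set K ⊆ X* (I)-generates K if and only if: whenever B is written as an increasing union B = ⋃_n B_n with B_1 ⊆ B_2 ⊆ …, the set ⋃_n (weak*-closed convex hull of B_n) is norm-dense in K. -/
open Filter NormedSpace

/-!
One direction is immediate: for an increasing decomposition the union of the weak*-closed convex
hulls is already convex. For the other, replace an arbitrary decomposition `Bₙ` by the increasing
one `B₀ ∪ ⋯ ∪ Bₙ`. Each weak*-closed convex hull of `Bₖ` is weak*-compact (it lies in `K`), and the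
convex hull of finitely many compact convex sets is compact, hence weak*-closed. So the
weak*-closed convex hull of `B₀ ∪ ⋯ ∪ Bₙ` lies in the plain convex hull of the union of the
weak*-closed convex hulls of the `Bₖ`, and density of the former gives density of the latter.
-/

open Set

section ConvexCompact

variable {E : Type*} [AddCommGroup E] [Module ℝ E] [TopologicalSpace E]
  [ContinuousAdd E] [ContinuousSMul ℝ E]

theorem isCompact_convexJoin {s t : Set E} (hs : IsCompact s) (ht : IsCompact t) :
    IsCompact (convexJoin ℝ s t) := by
  have hjoin : convexJoin ℝ s t =
      (fun p : ℝ × E × E => (1 - p.1) • p.2.1 + p.1 • p.2.2) '' (Icc 0 1 ×ˢ s ×ˢ t) := by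
    ext z
    simp only [convexJoin, segment_eq_image, mem_iUnion, mem_image, mem_prod, Prod.exists,
      exists_prop]
    constructor
    · rintro ⟨x, hx, y, hy, θ, hθ, rfl⟩
      exact ⟨θ, x, y, ⟨hθ, hx, hy⟩, rfl⟩
    · rintro ⟨θ, x, y, ⟨hθ, hx, hy⟩, rfl⟩
      exact ⟨x, hx, y, hy, θ, hθ, rfl⟩
  rw [hjoin]
  exact (isCompact_Icc.prod (hs.prod ht)).image (by fun_prop)

theorem isCompact_convexHull_union {s t : Set E} (hs : IsCompact s) (ht : IsCompact t)
    (hsc : Convex ℝ s) (htc : Convex ℝ t) : IsCompact (convexHull ℝ (s ∪ t)) := by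
  rcases s.eq_empty_or_nonempty with rfl | hs₀
  · rwa [empty_union, htc.convexHull_eq]
  rcases t.eq_empty_or_nonempty with rfl | ht₀
  · rwa [union_empty, hsc.convexHull_eq]
  rw [hsc.convexHull_union htc hs₀ ht₀]
  exact isCompact_convexJoin hs ht

theorem isCompact_convexHull_accumulate {A : ℕ → Set E} (hA : ∀ n, IsCompact (A n))
    (hAc : ∀ n, Convex ℝ (A n)) (n : ℕ) : IsCompact (convexHull ℝ (accumulate A n)) := by
  induction n with
  | zero => rw [accumulate_zero_nat, (hAc 0).convexHull_eq]; exact hA 0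
  | succ n ih =>
    rw [accumulate_succ, ← convexHull_convexHull_union_left]
    exact isCompact_convexHull_union ih (hA _) (convex_convexHull ℝ _) (hAc _)

end ConvexCompact

section WeakStarHull

variable {X : Type*} [NormedAddCommGroup X] [NormedSpace ℝ X]

theorem preimage_toWeakDual_convexHull (S : Set (WeakDual ℝ X)) :
    ⇑StrongDual.toWeakDual ⁻¹' convexHull ℝ S =
      convexHull ℝ (⇑StrongDual.toWeakDual ⁻¹' S) := by
  let e : StrongDual ℝ X ≃ₗ[ℝ] WeakDual ℝ X := StrongDual.toWeakDual
  rw [← e.image_symm_eq_preimage, ← e.image_symm_eq_preimage]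
  exact e.symm.toLinearMap.image_convexHull S

theorem convex_wstarClConvHull (S : Set (StrongDual ℝ X)) : Convex ℝ (wstarClConvHull S) :=
  (convex_convexHull ℝ _).closure.linear_preimage
    (StrongDual.toWeakDual : StrongDual ℝ X ≃ₗ[ℝ] WeakDual ℝ X).toLinearMap

theorem wstarClConvHull_mono {S T : Set (StrongDual ℝ X)} (h : S ⊆ T) :
    wstarClConvHull S ⊆ wstarClConvHull T :=
  preimage_mono (closure_mono (convexHull_mono (image_mono h)))

variable {K S : Set (StrongDual ℝ X)}

theorem closure_convexHull_toWeakDual_image_subset (hK : IsClosed (⇑StrongDual.toWeakDual '' K))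
    (hKc : Convex ℝ K) (hS : S ⊆ K) :
    closure (convexHull ℝ (⇑StrongDual.toWeakDual '' S)) ⊆ ⇑StrongDual.toWeakDual '' K :=
  closure_minimal (convexHull_min (image_mono hS) (hKc.linear_image
    (StrongDual.toWeakDual : StrongDual ℝ X ≃ₗ[ℝ] WeakDual ℝ X).toLinearMap)) hK

theorem wstarClConvHull_subset (hK : IsClosed (⇑StrongDual.toWeakDual '' K)) (hKc : Convex ℝ K)
    (hS : S ⊆ K) : wstarClConvHull S ⊆ K := by
  rw [← preimage_image_eq K StrongDual.toWeakDual.injective]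
  exact preimage_mono (closure_convexHull_toWeakDual_image_subset hK hKc hS)

theorem isCompact_closure_convexHull_toWeakDual_image
    (hK : IsCompact (⇑StrongDual.toWeakDual '' K)) (hKc : Convex ℝ K) (hS : S ⊆ K) :
    IsCompact (closure (convexHull ℝ (⇑StrongDual.toWeakDual '' S))) :=
  hK.of_isClosed_subset isClosed_closure
    (closure_convexHull_toWeakDual_image_subset hK.isClosed hKc hS)

theorem wstarClConvHull_accumulate_subset {Bn : ℕ → Set (StrongDual ℝ X)}
    (hB : ∀ n, IsCompact (closure (convexHull ℝ (⇑StrongDual.toWeakDual '' Bn n)))) (n : ℕ) :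
    wstarClConvHull (accumulate Bn n) ⊆ convexHull ℝ (⋃ m, wstarClConvHull (Bn m)) := by
  set A : ℕ → Set (WeakDual ℝ X) :=
    fun k => closure (convexHull ℝ (⇑StrongDual.toWeakDual '' Bn k))
  have hA : IsCompact (convexHull ℝ (accumulate A n)) :=
    isCompact_convexHull_accumulate hB (fun _ => (convex_convexHull ℝ _).closure) n
  have himage : ⇑StrongDual.toWeakDual '' accumulate Bn n ⊆ accumulate A n := by
    rw [accumulate_def, accumulate_def, image_iUnion₂]
    exact iUnion₂_mono fun k _ => (subset_convexHull ℝ _).trans subset_closure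
  calc wstarClConvHull (accumulate Bn n)
      ⊆ ⇑StrongDual.toWeakDual ⁻¹' convexHull ℝ (accumulate A n) :=
        preimage_mono (closure_minimal (convexHull_mono himage) hA.isClosed)
    _ = convexHull ℝ (⇑StrongDual.toWeakDual ⁻¹' accumulate A n) :=
        preimage_toWeakDual_convexHull _
    _ ⊆ convexHull ℝ (⋃ m, wstarClConvHull (Bn m)) := by
        refine convexHull_mono ?_
        rw [accumulate_def, preimage_iUnion₂]
        exact iUnion₂_subset fun k _ => subset_iUnion (fun m => wstarClConvHull (Bn m)) k

end WeakStarHull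

theorem iGenerates_iff_increasing_general {X : Type*} [NormedAddCommGroup X]
    [NormedSpace ℝ X]
    (K : Set (StrongDual ℝ X)) (hKcomp : IsCompact (⇑StrongDual.toWeakDual '' K))
    (hKconv : Convex ℝ K)
    (B : Set (StrongDual ℝ X)) (hBK : B ⊆ K) :
    IGenerates B K ↔
      ∀ Bn : ℕ → Set (StrongDual ℝ X), Monotone Bn → B = ⋃ n, Bn n →
        K ⊆ closure (⋃ n, wstarClConvHull (Bn n)) := by
  constructor
  · intro hI Bn hmono hB
    have hconv : Convex ℝ (⋃ n, wstarClConvHull (Bn n)) :=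
      Directed.convex_iUnion
        (Monotone.directed_le fun _ _ h => wstarClConvHull_mono (hmono h))
        fun n => convex_wstarClConvHull _
    rw [← hconv.convexHull_eq]
    exact (hI Bn hB).subset
  · intro h Bn hB
    have hBnK : ∀ n, Bn n ⊆ K := fun n => (subset_iUnion Bn n).trans (hB ▸ hBK)
    have hKclosed : IsClosed K := by
      rw [← preimage_image_eq K StrongDual.toWeakDual.injective]
      exact hKcomp.isClosed.preimage Dual.toWeakDual_continuous
    refine Subset.antisymm ?_ ?_
    · calc K ⊆ closure (⋃ n, wstarClConvHull (accumulate Bn n)) :=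
            h _ monotone_accumulate (hB.trans iUnion_accumulate.symm)
        _ ⊆ closure (convexHull ℝ (⋃ n, wstarClConvHull (Bn n))) :=
            closure_mono (iUnion_subset (wstarClConvHull_accumulate_subset fun k =>
              isCompact_closure_convexHull_toWeakDual_image hKcomp hKconv (hBnK k)))
    · exact closure_minimal (convexHull_min
        (iUnion_subset fun n => wstarClConvHull_subset hKcomp.isClosed hKconv (hBnK n)) hKconv)
        hKclosed

/-- `B` (I)-generates `K` iff for every increasing decomposition `B = ⋃ₙ Bₙ`,
the union of the weak*-closed convex hulls of the `Bₙ` is norm-dense in `K`. -/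
theorem iGenerates_iff_increasing {X : Type*} [NormedAddCommGroup X]
    [NormedSpace ℝ X] [CompleteSpace X]
    (K : Set (StrongDual ℝ X)) (hKcomp : IsCompact (⇑StrongDual.toWeakDual '' K))
    (hKconv : Convex ℝ K)
    (B : Set (StrongDual ℝ X)) (hBK : B ⊆ K) :
    IGenerates B K ↔
      ∀ Bn : ℕ → Set (StrongDual ℝ X), Monotone Bn → B = ⋃ n, Bn n →
        K ⊆ closure (⋃ n, wstarClConvHull (Bn n)) :=
  iGenerates_iff_increasing_general K hKcomp hKconv B hBK
end

section
/- Main theorem: Let X be a Banach space, K ⊆ X* weak*-compact convex, B ⊆ K an (I)-generating subset, and P : ℓ∞ → ℓ∞ a map with P(0) = 0. Write P_n(x) = |(Px)(n)|. Assume: (i) each P_n is convex and lower semicontinuous for the topology of pointwise convergence on every bounded subset of ℓ∞; (ii) there is M ≥ 0 with P_n(x+y) ≤ M(P_n(x)+P_n(y)) for all n and all x,y ∈ ℓ∞; (iii) P is norm-continuous at 0. Then for every bounded sequence x = (x_n) in X: sup_{x*∈K} limsup_n P_n(x*(x)) ≤ M · sup_{x*∈B} limsup_n P_n(x*(x)),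 where x*(x) denotes the sequence (x*(x_n))_n. -/
open Filter NormedSpace

/-- The space ℓ∞ of bounded real sequences. -/
noncomputable abbrev Linf : Type := ↥(lp (fun _ : ℕ => ℝ) ⊤)

/-- The topology of pointwise convergence on ℓ∞. -/
noncomputable def tauP : TopologicalSpace Linf :=
  TopologicalSpace.induced (fun x : Linf => (x : ℕ → ℝ)) Pi.topologicalSpace

/-!
Fix a real `a` above the supremum over `B` and split `B` into the pieces
`Bₙ = {x* ∈ B | ‖x*‖ ≤ n, Pₖ(x*(x)) ≤ a for k ≥ n}`. On a norm-bounded set of functionals,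
`x* ↦ Pₖ(x*(x))` is convex and weak*-lower semicontinuous, so the bound `Pₖ ≤ a` for `k ≥ n`
passes to the weak*-closed convex hull of `Bₙ`, and an eventual bound passes to convex
combinations of these hulls. By (I)-generation every `x* ∈ K` is a norm limit of such
combinations; continuity of `P` at `0` and `Pₖ(u + v) ≤ M (Pₖ u + Pₖ v)` then give
`limsup Pₖ(x*(x)) ≤ M a`.
-/

open Set Topology Metric

lemma EReal.le_coe_mul_of_forall_lt {M : ℝ} (hM : 0 < M) {z c : EReal}
    (h : ∀ a : ℝ, c < a → z ≤ M * a) : z ≤ M * c := by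
  have hM' : (0 : EReal) < M := EReal.coe_pos.2 hM
  rw [← EReal.div_le_iff_le_mul hM' (EReal.coe_ne_top M)]
  exact EReal.le_of_forall_lt_iff_le.1 fun a ha =>
    (EReal.div_le_iff_le_mul hM' (EReal.coe_ne_top M)).2 (h a ha)

lemma eventually_abs_apply_le_of_continuousAt {E : Type*} [TopologicalSpace E] {P : E → Linf}
    {z₀ : E} (hP : ContinuousAt P z₀) (hz₀ : P z₀ = 0) {t : ℝ} (ht : 0 < t) :
    ∀ᶠ z in 𝓝 z₀, ∀ k, |(P z : ℕ → ℝ) k| ≤ t := by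
  have : ∀ᶠ z in 𝓝 z₀, ‖P z‖ < t := by
    have := hP.eventually (ball_mem_nhds (P z₀) ht)
    simpa [hz₀] using this
  filter_upwards [this] with z hz k
  exact (lp.norm_apply_le_norm ENNReal.top_ne_zero _ k).trans hz.le

lemma convex_setOf_eventually_le {ι E : Type*} [AddCommGroup E] [Module ℝ E] {l : Filter ι}
    {p : ι → E → ℝ} (hp : ∀ i, ConvexOn ℝ univ (p i)) (a : ℝ) :
    Convex ℝ {z | ∀ᶠ i in l, p i z ≤ a} := by
  intro z hz w hw s r hs hr hsr
  filter_upwards [hz, hw] with i hzi hwi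
  calc p i (s • z + r • w) ≤ s • p i z + r • p i w :=
        (hp i).2 (mem_univ z) (mem_univ w) hs hr hsr
    _ ≤ s • a + r • a := by gcongr
    _ = a := by rw [← add_smul, hsr, one_smul]

lemma eventually_le_of_mem_closure {ι E : Type*} [AddGroup E] [TopologicalSpace E]
    [ContinuousSub E] {l : Filter ι} {p : ι → E → ℝ} {M t a : ℝ} (hM : 0 ≤ M)
    (hsub : ∀ i z w, p i (z + w) ≤ M * (p i z + p i w))
    (hsmall : ∀ᶠ z in 𝓝 0, ∀ i, p i z ≤ t) {S : Set E} (hS : ∀ z ∈ S, ∀ᶠ i in l, p i z ≤ a)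
    {z : E} (hz : z ∈ closure S) : ∀ᶠ i in l, p i z ≤ M * (t + a) := by
  have hnear : ∀ᶠ w in 𝓝 z, ∀ i, p i (z - w) ≤ t := by
    have : Tendsto (fun w => z - w) (𝓝 z) (𝓝 0) := by
      simpa using (tendsto_const_nhds (x := z)).sub (tendsto_id (x := 𝓝 z))
    exact this.eventually hsmall
  obtain ⟨w, hwS, hw⟩ := (mem_closure_iff_frequently.1 hz).and_eventually hnear |>.exists
  filter_upwards [hS w hwS] with i hwi
  calc p i z = p i ((z - w) + w) := by rw [sub_add_cancel]
    _ ≤ M * (p i (z - w) + p i w) := hsub i _ _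
    _ ≤ M * (t + a) := by gcongr; exact hw i

section WeakStar

variable {X : Type*} [NormedAddCommGroup X] [NormedSpace ℝ X]

lemma wstarClConvHull_subset_preimage {S : Set (StrongDual ℝ X)} {C : Set (WeakDual ℝ X)}
    (hC : IsClosed C) (hCconv : Convex ℝ C) (hSC : MapsTo StrongDual.toWeakDual S C) :
    wstarClConvHull S ⊆ StrongDual.toWeakDual ⁻¹' C :=
  preimage_mono (closure_minimal (convexHull_min hSC.image_subset hCconv) hC)

lemma continuous_tauP_of_apply_eq (x : ℕ → X) {y : StrongDual ℝ X → Linf}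
    (hy : ∀ (f : StrongDual ℝ X) (n : ℕ), (y f : ℕ → ℝ) n = f (x n)) :
    Continuous[_, tauP] fun φ : WeakDual ℝ X => y (WeakDual.toStrongDual φ) :=
  continuous_induced_rng.2 <| continuous_pi fun n => by
    simp only [Function.comp_apply, hy]
    exact WeakDual.eval_continuous (x n)

variable (y : StrongDual ℝ X →L[ℝ] Linf) {φ : Linf → ℝ}

lemma isClosed_ball_inter_sublevel
    (hyw : Continuous[_, tauP] fun ψ : WeakDual ℝ X => y (WeakDual.toStrongDual ψ))
    (hφ : ∀ S : Set Linf, Bornology.IsBounded S → @LowerSemicontinuousOn Linf ℝ tauP _ φ S)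
    (r a : ℝ) :
    IsClosed (WeakDual.toStrongDual ⁻¹' (closedBall 0 r ∩ {g | φ (y g) ≤ a})) := by
  set s : Set (WeakDual ℝ X) := WeakDual.toStrongDual ⁻¹' closedBall 0 r
  have hlsc : LowerSemicontinuousOn (fun ψ : WeakDual ℝ X => φ (y (WeakDual.toStrongDual ψ))) s :=
    @LowerSemicontinuousOn.comp _ _ _ tauP _ _ _ _ _ _
      (hφ _ (y.lipschitz.isBounded_image isBounded_closedBall))
      (@Continuous.continuousOn _ _ _ tauP _ _ hyw) fun ψ hψ => mem_image_of_mem y hψ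
  obtain ⟨v, hv, hsv⟩ := lowerSemicontinuousOn_iff_preimage_Iic.1 hlsc a
  have hsv' : WeakDual.toStrongDual ⁻¹' (closedBall 0 r ∩ {g | φ (y g) ≤ a}) = s ∩ v := hsv
  rw [hsv']
  exact (WeakDual.isClosed_closedBall 0 r).inter hv

lemma le_of_mem_wstarClConvHull
    (hyw : Continuous[_, tauP] fun ψ : WeakDual ℝ X => y (WeakDual.toStrongDual ψ))
    (hconv : ConvexOn ℝ univ φ)
    (hφ : ∀ S : Set Linf, Bornology.IsBounded S → @LowerSemicontinuousOn Linf ℝ tauP _ φ S)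
    {S : Set (StrongDual ℝ X)} {r a : ℝ} (hSr : S ⊆ closedBall 0 r)
    (hSa : ∀ g ∈ S, φ (y g) ≤ a) {g : StrongDual ℝ X} (hg : g ∈ wstarClConvHull S) :
    φ (y g) ≤ a := by
  set D : Set (StrongDual ℝ X) := closedBall 0 r ∩ {g | φ (y g) ≤ a}
  have hDconv : Convex ℝ D := by
    refine (convex_closedBall 0 r).inter ?_
    have := (hconv.convex_le a).linear_preimage y.toLinearMap
    simp only [mem_univ, true_and] at this
    exact this
  have hSD : MapsTo StrongDual.toWeakDual S (WeakDual.toStrongDual ⁻¹' D) := fun g hg => by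
    simpa [D] using And.intro (hSr hg) (hSa g hg)
  simpa using (wstarClConvHull_subset_preimage (isClosed_ball_inter_sublevel y hyw hφ r a)
    (hDconv.linear_preimage WeakDual.toStrongDual.toLinearMap) hSD hg).2

end WeakStar

lemma exists_continuousLinearMap_coe_eq {X : Type*} [NormedAddCommGroup X] [NormedSpace ℝ X]
    (x : ℕ → X) {R : ℝ} (hR : ∀ n, ‖x n‖ ≤ R) {y : StrongDual ℝ X → Linf}
    (hy : ∀ (f : StrongDual ℝ X) (n : ℕ), (y f : ℕ → ℝ) n = f (x n)) :
    ∃ yL : StrongDual ℝ X →L[ℝ] Linf, ⇑yL = y := by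
  have hlin : IsLinearMap ℝ y :=
    ⟨fun f g => lp.ext <| funext fun n => by simp [hy],
      fun c f => lp.ext <| funext fun n => by simp [hy]⟩
  refine ⟨(hlin.mk' y).mkContinuous (max R 0) fun f => ?_, rfl⟩
  refine lp.norm_le_of_forall_le (by positivity) fun n => ?_
  calc ‖(y f : ℕ → ℝ) n‖ = ‖f (x n)‖ := by rw [hy]
    _ ≤ ‖f‖ * ‖x n‖ := f.le_opNorm _
    _ ≤ max R 0 * ‖f‖ := by
      rw [mul_comm]
      gcongr
      exact (hR n).trans (le_max_left _ _)

lemma iUnion_setOf_norm_le_forall_ge_eq {E : Type*} [SeminormedAddCommGroup E] {q : ℕ → E → ℝ}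
    {B : Set E} {a : ℝ} (hB : ∀ g ∈ B, ∀ᶠ k in atTop, q k g ≤ a) :
    B = ⋃ n : ℕ, {g ∈ B | ‖g‖ ≤ n ∧ ∀ k ≥ n, q k g ≤ a} := by
  ext g
  simp only [mem_iUnion, mem_ofPred_eq]
  constructor
  · intro hg
    obtain ⟨N, hN⟩ := eventually_atTop.1 (hB g hg)
    obtain ⟨m, hm⟩ := exists_nat_ge ‖g‖
    exact ⟨max N m, hg, hm.trans (by exact_mod_cast le_max_right N m),
      fun k hk => hN k (le_of_max_le_left hk)⟩
  · rintro ⟨n, hg, -⟩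
    exact hg

lemma eventually_le_of_iGenerates {X : Type*} [NormedAddCommGroup X] [NormedSpace ℝ X]
    {B K : Set (StrongDual ℝ X)} (hI : IGenerates B K) (y : StrongDual ℝ X →L[ℝ] Linf)
    (hyw : Continuous[_, tauP] fun ψ : WeakDual ℝ X => y (WeakDual.toStrongDual ψ))
    {p : ℕ → Linf → ℝ} (hconv : ∀ k, ConvexOn ℝ univ (p k))
    (hlsc : ∀ k (S : Set Linf), Bornology.IsBounded S →
      @LowerSemicontinuousOn Linf ℝ tauP _ (p k) S)
    {M t a : ℝ} (hM : 0 ≤ M) (hsub : ∀ k z w, p k (z + w) ≤ M * (p k z + p k w))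
    (hsmall : ∀ᶠ z in 𝓝 0, ∀ k, p k z ≤ t) (hB : ∀ g ∈ B, ∀ᶠ k in atTop, p k (y g) ≤ a)
    {f : StrongDual ℝ X} (hf : f ∈ K) :
    ∀ᶠ k in atTop, p k (y f) ≤ M * (t + a) := by
  set Bn : ℕ → Set (StrongDual ℝ X) := fun n => {g ∈ B | ‖g‖ ≤ n ∧ ∀ k ≥ n, p k (y g) ≤ a}
  have hK := hI Bn (iUnion_setOf_norm_le_forall_ge_eq hB)
  have hhull : ∀ g ∈ convexHull ℝ (⋃ n, wstarClConvHull (Bn n)),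
      ∀ᶠ k in atTop, p k (y g) ≤ a := by
    refine convexHull_min (iUnion_subset fun n g hg => ?_)
      ((convex_setOf_eventually_le hconv a).linear_preimage y.toLinearMap)
    exact eventually_atTop.2 ⟨n, fun k hk => le_of_mem_wstarClConvHull y hyw (hconv k) (hlsc k)
      (fun g' hg' => mem_closedBall_zero_iff.2 hg'.2.1) (fun g' hg' => hg'.2.2 k hk) hg⟩
  refine eventually_le_of_mem_closure hM hsub hsmall (forall_mem_image.2 hhull) ?_
  exact map_mem_closure y.continuous (hK ▸ hf) fun g hg => mem_image_of_mem y hg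

theorem main_theorem_general {X : Type*} [NormedAddCommGroup X] [NormedSpace ℝ X]
    (K : Set (StrongDual ℝ X))
    (B : Set (StrongDual ℝ X)) (hI : IGenerates B K)
    (P : Linf → Linf) (hP0 : P 0 = 0)
    (hconvex : ∀ n : ℕ, ConvexOn ℝ Set.univ (fun z : Linf => |(P z : ℕ → ℝ) n|))
    (hlsc : ∀ n : ℕ, ∀ S : Set Linf, Bornology.IsBounded S →
      @LowerSemicontinuousOn Linf ℝ tauP _ (fun z : Linf => |(P z : ℕ → ℝ) n|) S)
    (M : ℝ) (hM : 0 ≤ M)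
    (hsub : ∀ (n : ℕ) (z w : Linf),
      |(P (z + w) : ℕ → ℝ) n| ≤ M * (|(P z : ℕ → ℝ) n| + |(P w : ℕ → ℝ) n|))
    (hPcont : ContinuousAt P 0)
    (x : ℕ → X) (R : ℝ) (hR : ∀ n, ‖x n‖ ≤ R)
    (y : StrongDual ℝ X → Linf) (hy : ∀ (f : StrongDual ℝ X) (n : ℕ), (y f : ℕ → ℝ) n = f (x n)) :
    (⨆ f : K, limsup (fun n => ((|(P (y f) : ℕ → ℝ) n| : ℝ) : EReal)) atTop) ≤
      (M : EReal) * ⨆ f : B, limsup (fun n => ((|(P (y f) : ℕ → ℝ) n| : ℝ) : EReal)) atTop := by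
  have hyw := continuous_tauP_of_apply_eq x hy
  obtain ⟨y, rfl⟩ := exists_continuousLinearMap_coe_eq x hR hy
  rcases hM.eq_or_lt with rfl | hMpos
  · have hzero (z : Linf) (n : ℕ) : |(P z : ℕ → ℝ) n| = 0 := by
      simpa using hsub n 0 z
    simp [hzero]
  refine EReal.le_coe_mul_of_forall_lt hMpos fun a ha => iSup_le fun f => ?_
  obtain ⟨a', hBa', ha'a⟩ := EReal.lt_iff_exists_real_btwn.1 ha
  have hB : ∀ g ∈ B, ∀ᶠ n in atTop, |(P (y g) : ℕ → ℝ) n| ≤ a' := fun g hg =>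
    (eventually_lt_of_limsup_lt ((le_iSup (fun g : B => _) ⟨g, hg⟩).trans_lt hBa')).mono
      fun n hn => (EReal.coe_lt_coe_iff.1 hn).le
  -- tolerance `t = a - a'`, so that `M * (t + a') = M * a`
  have hsmall := eventually_abs_apply_le_of_continuousAt hPcont hP0
    (sub_pos.2 (EReal.coe_lt_coe_iff.1 ha'a))
  have hf := eventually_le_of_iGenerates hI y hyw hconvex hlsc hM hsub hsmall hB f.2
  refine limsup_le_of_le (by isBoundedDefault) (hf.mono fun n hn => ?_)
  rw [sub_add_cancel] at hn
  exact_mod_cast hn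

/-- Main theorem: if `B` (I)-generates the weak*-compact convex set `K` and
`P : ℓ∞ → ℓ∞` satisfies `P 0 = 0`, each `Pₙ = |(P·)(n)|` is convex and
pointwise-lower-semicontinuous on bounded sets, `Pₙ(x+y) ≤ M(Pₙx + Pₙy)` and
`P` is norm-continuous at `0`, then for every bounded sequence `(x_n)` in `X`
(with `y f` denoting the element `(f(x_n))ₙ` of ℓ∞):
`sup_{f ∈ K} limsup_n Pₙ(f(x)) ≤ M · sup_{f ∈ B} limsup_n Pₙ(f(x))`. -/
theorem main_theorem {X : Type*} [NormedAddCommGroup X] [NormedSpace ℝ X]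
    [CompleteSpace X]
    (K : Set (StrongDual ℝ X)) (hKcomp : IsCompact (⇑StrongDual.toWeakDual '' K))
    (hKconv : Convex ℝ K)
    (B : Set (StrongDual ℝ X)) (hBK : B ⊆ K) (hI : IGenerates B K)
    (P : Linf → Linf) (hP0 : P 0 = 0)
    (hconvex : ∀ n : ℕ, ConvexOn ℝ Set.univ (fun z : Linf => |(P z : ℕ → ℝ) n|))
    (hlsc : ∀ n : ℕ, ∀ S : Set Linf, Bornology.IsBounded S →
      @LowerSemicontinuousOn Linf ℝ tauP _ (fun z : Linf => |(P z : ℕ → ℝ) n|) S)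
    (M : ℝ) (hM : 0 ≤ M)
    (hsub : ∀ (n : ℕ) (z w : Linf),
      |(P (z + w) : ℕ → ℝ) n| ≤ M * (|(P z : ℕ → ℝ) n| + |(P w : ℕ → ℝ) n|))
    (hPcont : ContinuousAt P 0)
    (x : ℕ → X) (R : ℝ) (hR : ∀ n, ‖x n‖ ≤ R)
    (y : StrongDual ℝ X → Linf) (hy : ∀ (f : StrongDual ℝ X) (n : ℕ), (y f : ℕ → ℝ) n = f (x n)) :
    (⨆ f : K, limsup (fun n => ((|(P (y f) : ℕ → ℝ) n| : ℝ) : EReal)) atTop) ≤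
      (M : EReal) * ⨆ f : B, limsup (fun n => ((|(P (y f) : ℕ → ℝ) n| : ℝ) : EReal)) atTop :=
  main_theorem_general K B hI P hP0 hconvex hlsc M hM hsub hPcont x R hR y hy
end

section
/- Let K ⊆ X* be weak*-compact convex, B ⊆ K an (I)-generating subset, A = (a_{nk}) a positive regular matrix, and p ≥ 1. Then for every bounded sequence (x_n) in X: sup_{x*∈K} limsup_n ∑_k a_{nk}|x*(x_k)|^p = sup_{x*∈B} limsup_n ∑_k a_{nk}|x*(x_k)|^p. -/
/-!
Write `Sₙ f = ∑ₖ aₙₖ |f (xₖ)|ᵖ` and let `c` exceed every `limsup Sₙ` over `B`. The sets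
`U_N = {f | Sₘ f ≤ c for all m ≥ N}` are convex (each `Sₘ` is convex) and weak*-closed (each `Sₘ`
is a supremum of weak*-continuous finite sums), and they increase to a set containing `B`.
Applying (I)-generation to `B = ⋃ (B ∩ U_N)` puts `K` in the norm closure of the convex set
`⋃ U_N`. Since the row sums of `A` are bounded, the `Sₙ` are Lipschitz on norm-balls uniformly in
`n`, so `f ↦ limsup Sₙ f` is norm-continuous and hence `≤ c` on that closure. The suprema are
finite because a weak*-compact `K` is norm-bounded (uniform boundedness).
-/

open Filter NormedSpace

open Set Metric Topology
open scoped NNReal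

lemma abs_rpow_sub_rpow_le {p L s t : ℝ} (hp : 1 ≤ p) (hs : s ∈ Icc 0 L) (ht : t ∈ Icc 0 L) :
    |s ^ p - t ^ p| ≤ p * L ^ (p - 1) * |s - t| := by
  simpa only [Real.norm_eq_abs] using (convex_Icc 0 L).norm_image_sub_le_of_norm_hasDerivWithin_le
    (f := fun t : ℝ => t ^ p) (fun t _ => (Real.hasDerivAt_rpow_const (Or.inr hp)).hasDerivWithinAt)
    (fun r hr => by
      rw [Real.norm_eq_abs, abs_of_nonneg (by have := hr.1; positivity)]
      gcongr
      exacts [hr.1, hr.2]) ht hs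

lemma convexOn_abs_rpow {p : ℝ} (hp : 1 ≤ p) : ConvexOn ℝ univ fun t : ℝ => |t| ^ p := by
  refine ⟨convex_univ, fun u _ v _ s t hs ht hst => ?_⟩
  have htri : |s • u + t • v| ≤ s * |u| + t * |v| := by
    simpa only [smul_eq_mul, abs_mul, abs_of_nonneg hs, abs_of_nonneg ht] using
      abs_add_le (s * u) (t * v)
  calc |s • u + t • v| ^ p ≤ (s * |u| + t * |v|) ^ p := by gcongr
    _ ≤ s • |u| ^ p + t • |v| ^ p := (convexOn_rpow hp).2 (abs_nonneg u) (abs_nonneg v) hs ht hst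

lemma ConvexOn.tsum {ι E : Type*} [AddCommMonoid E] [Module ℝ E] {s : Set E} {f : ι → E → ℝ}
    (hs : Convex ℝ s) (hf : ∀ i, ConvexOn ℝ s (f i)) (hsum : ∀ x ∈ s, Summable fun i => f i x) :
    ConvexOn ℝ s fun x => ∑' i, f i x := by
  refine ⟨hs, fun x hx y hy a b ha hb hab => ?_⟩
  calc ∑' i, f i (a • x + b • y) ≤ ∑' i, (a • f i x + b • f i y) :=
        (hsum _ (hs hx hy ha hb hab)).tsum_le_tsum (fun i => (hf i).2 hx hy ha hb hab)
          (((hsum x hx).const_smul a).add ((hsum y hy).const_smul b))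
    _ = a • ∑' i, f i x + b • ∑' i, f i y := by
      rw [Summable.tsum_add ((hsum x hx).const_smul a) ((hsum y hy).const_smul b),
        Summable.tsum_const_smul _ (hsum x hx), Summable.tsum_const_smul _ (hsum y hy)]

lemma lowerSemicontinuous_tsum_of_nonneg {ι α : Type*} [TopologicalSpace α] {f : ι → α → ℝ}
    (hf : ∀ i, LowerSemicontinuous (f i)) (h0 : ∀ i x, 0 ≤ f i x)
    (hsum : ∀ x, Summable fun i => f i x) : LowerSemicontinuous fun x => ∑' i, f i x := by
  have hlub : ∀ x, IsLUB (range fun F : Finset ι => ∑ i ∈ F, f i x) (∑' i, f i x) :=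
    fun x => isLUB_hasSum (h0 · x) (hsum x).hasSum
  simp_rw [← fun x => (hlub x).ciSup_eq]
  exact lowerSemicontinuous_ciSup (fun x => (hlub x).bddAbove) fun F =>
    lowerSemicontinuous_sum fun i _ => hf i

section WeightedPowerSum

variable {w u v : ℕ → ℝ} {p L : ℝ}

lemma mul_abs_rpow_le_mul_rpow (hw : ∀ k, 0 ≤ w k) (hp : 0 ≤ p) (hu : ∀ k, |u k| ≤ L) (k : ℕ) :
    w k * |u k| ^ p ≤ w k * L ^ p := by
  gcongr
  exacts [hw k, hu k]

lemma summable_mul_abs_rpow (hw : ∀ k, 0 ≤ w k) (hws : Summable w) (hp : 0 ≤ p)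
    (hu : ∀ k, |u k| ≤ L) : Summable fun k => w k * |u k| ^ p :=
  (hws.mul_right (L ^ p)).of_nonneg_of_le (fun k => mul_nonneg (hw k) (by positivity))
    (mul_abs_rpow_le_mul_rpow hw hp hu)

lemma tsum_mul_abs_rpow_le (hw : ∀ k, 0 ≤ w k) (hws : Summable w) (hp : 0 ≤ p)
    (hu : ∀ k, |u k| ≤ L) : ∑' k, w k * |u k| ^ p ≤ (∑' k, w k) * L ^ p := by
  rw [← tsum_mul_right]
  exact (summable_mul_abs_rpow hw hws hp hu).tsum_le_tsum (mul_abs_rpow_le_mul_rpow hw hp hu)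
    (hws.mul_right _)

lemma tsum_mul_abs_rpow_le_add (hw : ∀ k, 0 ≤ w k) (hws : Summable w) (hp : 1 ≤ p)
    (hu : ∀ k, |u k| ≤ L) (hv : ∀ k, |v k| ≤ L) {δ : ℝ} (huv : ∀ k, |u k - v k| ≤ δ) :
    ∑' k, w k * |u k| ^ p ≤ ∑' k, w k * |v k| ^ p + (∑' k, w k) * (p * L ^ (p - 1) * δ) := by
  have hp0 : 0 ≤ p := zero_le_one.trans hp
  have hpow : ∀ k, |u k| ^ p ≤ |v k| ^ p + p * L ^ (p - 1) * δ := by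
    intro k
    have hL : 0 ≤ L := (abs_nonneg _).trans (hu k)
    have := calc |u k| ^ p - |v k| ^ p ≤ |(|u k| ^ p - |v k| ^ p)| := le_abs_self _
      _ ≤ p * L ^ (p - 1) * |(|u k| - |v k|)| :=
        abs_rpow_sub_rpow_le hp ⟨abs_nonneg _, hu k⟩ ⟨abs_nonneg _, hv k⟩
      _ ≤ p * L ^ (p - 1) * δ := by
        gcongr
        exact (abs_abs_sub_abs_le_abs_sub _ _).trans (huv k)
    linarith
  have hterm : ∀ k, w k * |u k| ^ p ≤ w k * |v k| ^ p + w k * (p * L ^ (p - 1) * δ) := fun k => by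
    rw [← mul_add]
    exact mul_le_mul_of_nonneg_left (hpow k) (hw k)
  have hsv := summable_mul_abs_rpow hw hws hp0 hv
  calc ∑' k, w k * |u k| ^ p ≤ ∑' k, (w k * |v k| ^ p + w k * (p * L ^ (p - 1) * δ)) :=
        (summable_mul_abs_rpow hw hws hp0 hu).tsum_le_tsum hterm (hsv.add (hws.mul_right _))
    _ = _ := by rw [hsv.tsum_add (hws.mul_right _), tsum_mul_right]

end WeightedPowerSum

section PowerSumFunctional

variable {X : Type*} [NormedAddCommGroup X] [NormedSpace ℝ X] {w : ℕ → ℝ} {p R : ℝ} {x : ℕ → X}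

lemma abs_apply_le (hR : ∀ k, ‖x k‖ ≤ R) (g : StrongDual ℝ X) (k : ℕ) : |g (x k)| ≤ ‖g‖ * R := by
  rw [← Real.norm_eq_abs]
  exact g.le_opNorm_of_le (hR k)

lemma convexOn_tsum_mul_abs_rpow_apply (hw : ∀ k, 0 ≤ w k) (hws : Summable w) (hp : 1 ≤ p)
    (hR : ∀ k, ‖x k‖ ≤ R) :
    ConvexOn ℝ univ fun g : StrongDual ℝ X => ∑' k, w k * |g (x k)| ^ p :=
  ConvexOn.tsum convex_univ
    (fun k => ((convexOn_abs_rpow hp).comp_linearMap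
      (ContinuousLinearMap.apply ℝ ℝ (x k)).toLinearMap).smul (hw k))
    fun g _ => summable_mul_abs_rpow hw hws (zero_le_one.trans hp) (abs_apply_le hR g)

lemma lowerSemicontinuous_tsum_mul_abs_rpow_apply (hw : ∀ k, 0 ≤ w k) (hws : Summable w)
    (hp : 0 ≤ p) (hR : ∀ k, ‖x k‖ ≤ R) :
    LowerSemicontinuous fun φ : WeakDual ℝ X => ∑' k, w k * |φ (x k)| ^ p :=
  lowerSemicontinuous_tsum_of_nonneg
    (fun k => (continuous_const.mul ((WeakDual.eval_continuous (x k)).abs.rpow_const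
      fun _ => Or.inr hp)).lowerSemicontinuous)
    (fun k φ => mul_nonneg (hw k) (by positivity))
    fun φ => summable_mul_abs_rpow hw hws hp (abs_apply_le hR (WeakDual.toStrongDual φ))

lemma lipschitzOnWith_tsum_mul_abs_rpow_apply (hw : ∀ k, 0 ≤ w k) (hws : Summable w)
    (hp : 1 ≤ p) (hR : ∀ k, ‖x k‖ ≤ R) {C : ℝ} (hC : ∑' k, w k ≤ C) (r : ℝ) :
    LipschitzOnWith (C * (p * (r * R) ^ (p - 1) * R)).toNNReal
      (fun g : StrongDual ℝ X => ∑' k, w k * |g (x k)| ^ p) (closedBall 0 r) := by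
  refine LipschitzOnWith.of_le_add_mul' _ fun g hg g' hg' => ?_
  have hR0 : 0 ≤ R := (norm_nonneg _).trans (hR 0)
  have hr0 : 0 ≤ r := nonneg_of_mem_closedBall hg
  have hbound : ∀ f ∈ closedBall (0 : StrongDual ℝ X) r, ∀ k, |f (x k)| ≤ r * R := fun f hf k =>
    (abs_apply_le hR f k).trans (by gcongr; simpa using hf)
  have hdiff : ∀ k, |g (x k) - g' (x k)| ≤ dist g g' * R := fun k => by
    simpa [dist_eq_norm] using abs_apply_le hR (g - g') k
  refine (tsum_mul_abs_rpow_le_add hw hws hp (hbound g hg) (hbound g' hg') hdiff).trans ?_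
  have hp0 : 0 ≤ p := zero_le_one.trans hp
  calc _ ≤ _ + C * (p * (r * R) ^ (p - 1) * (dist g g' * R)) := by gcongr
    _ = _ := by ring

end PowerSumFunctional

lemma LipschitzOnWith.limsup {E : Type*} [PseudoMetricSpace E] {S : ℕ → E → ℝ} {s : Set E}
    {L : ℝ≥0} (hS : ∀ m, LipschitzOnWith L (S m) s)
    (hbdd : ∀ g ∈ s, IsBoundedUnder (· ≤ ·) atTop (S · g))
    (hcobdd : ∀ g ∈ s, IsCoboundedUnder (· ≤ ·) atTop (S · g)) :
    LipschitzOnWith L (fun g => limsup (S · g) atTop) s := by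
  refine LipschitzOnWith.of_le_add_mul L fun g hg g' hg' => ?_
  rw [← limsup_add_const _ _ _ (hbdd g' hg') (hcobdd g' hg')]
  exact limsup_le_limsup (Eventually.of_forall fun m => (hS m).le_add_mul hg hg') (hcobdd g hg)
    (isBoundedUnder_le_add (hbdd g' hg') isBoundedUnder_const)

lemma locallyLipschitz_limsup {E : Type*} [PseudoMetricSpace E] {S : ℕ → E → ℝ}
    (hS : ∀ g, ∃ L, ∃ t ∈ 𝓝 g, ∀ m, LipschitzOnWith L (S m) t)
    (hbdd : ∀ g, IsBoundedUnder (· ≤ ·) atTop (S · g))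
    (hcobdd : ∀ g, IsCoboundedUnder (· ≤ ·) atTop (S · g)) :
    LocallyLipschitz fun g => limsup (S · g) atTop := fun g =>
  let ⟨L, t, ht, hL⟩ := hS g
  ⟨L, t, ht, LipschitzOnWith.limsup hL (fun g _ => hbdd g) fun g _ => hcobdd g⟩

section IGenerates

variable {X : Type*} [NormedAddCommGroup X] [NormedSpace ℝ X]

lemma wstarClConvHull_subset_s17 {T U : Set (StrongDual ℝ X)} (hTU : T ⊆ U) (hU : Convex ℝ U)
    (hUc : IsClosed (StrongDual.toWeakDual '' U)) : wstarClConvHull T ⊆ U := fun _ hg =>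
  StrongDual.toWeakDual.injective.mem_set_image.1 <| closure_minimal
    (convexHull_min (image_mono hTU) (hU.linear_image StrongDual.toWeakDual.toLinearMap)) hUc hg

lemma IGenerates.eq_empty {K : Set (StrongDual ℝ X)} (hI : IGenerates ∅ K) : K = ∅ := by
  simpa [wstarClConvHull] using hI (fun _ => ∅) (by simp)

variable {S : ℕ → StrongDual ℝ X → ℝ}

lemma limsup_le_of_iGenerates (hquasi : ∀ m, QuasiconvexOn ℝ univ (S m))
    (hlsc : ∀ m, LowerSemicontinuous fun φ : WeakDual ℝ X => S m (StrongDual.toWeakDual.symm φ))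
    (hcont : Continuous fun g => limsup (S · g) atTop)
    (hbdd : ∀ g, IsBoundedUnder (· ≤ ·) atTop (S · g))
    (hcobdd : ∀ g, IsCoboundedUnder (· ≤ ·) atTop (S · g))
    {B K : Set (StrongDual ℝ X)} (hI : IGenerates B K) {c : ℝ}
    (hB : ∀ f ∈ B, limsup (S · f) atTop < c) {g : StrongDual ℝ X} (hg : g ∈ K) :
    limsup (S · g) atTop ≤ c := by
  set U : ℕ → Set (StrongDual ℝ X) := fun N => ⋂ m ≥ N, {g | S m g ≤ c}
  have hUmono : Monotone U := fun N N' hN g hg =>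
    mem_iInter₂.2 fun m hm => mem_iInter₂.1 hg m (hN.trans hm)
  have hUconv : ∀ N, Convex ℝ (U N) := fun N =>
    convex_iInter₂ fun m _ => by simpa using hquasi m c
  have hUclosed : ∀ N, IsClosed (StrongDual.toWeakDual '' U N) := fun N => by
    rw [LinearEquiv.image_eq_preimage_symm]
    simp only [U, preimage_iInter₂]
    exact isClosed_biInter fun m _ => (hlsc m).isClosed_preimage c
  have hBU : B = ⋃ N, B ∩ U N := by
    refine Subset.antisymm (fun f hf => ?_) (iUnion_subset fun N => inter_subset_left)
    obtain ⟨N, hN⟩ := eventually_atTop.1 (eventually_lt_of_limsup_lt (hB f hf) (hbdd f))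
    exact mem_iUnion.2 ⟨N, hf, mem_iInter₂.2 fun m hm => (hN m hm).le⟩
  have hKU : K ⊆ closure (⋃ N, U N) := by
    rw [hI _ hBU]
    exact closure_mono (convexHull_min (iUnion_mono fun N =>
      wstarClConvHull_subset_s17 inter_subset_right (hUconv N) (hUclosed N))
      (hUmono.directed_le.convex_iUnion hUconv))
  have hUle : ⋃ N, U N ⊆ {g | limsup (S · g) atTop ≤ c} := iUnion_subset fun N g hg =>
    limsup_le_of_le (hcobdd g) (eventually_atTop.2 ⟨N, fun m hm => mem_iInter₂.1 hg m hm⟩)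
  exact closure_minimal hUle (isClosed_le hcont continuous_const) (hKU hg)

theorem iSup_limsup_eq_of_iGenerates (hquasi : ∀ m, QuasiconvexOn ℝ univ (S m))
    (hlsc : ∀ m, LowerSemicontinuous fun φ : WeakDual ℝ X => S m (StrongDual.toWeakDual.symm φ))
    (hlip : ∀ g, ∃ L, ∃ t ∈ 𝓝 g, ∀ m, LipschitzOnWith L (S m) t)
    (hbdd : ∀ g, IsBoundedUnder (· ≤ ·) atTop (S · g))
    (hcobdd : ∀ g, IsCoboundedUnder (· ≤ ·) atTop (S · g))
    {B K : Set (StrongDual ℝ X)} (hBK : B ⊆ K) (hI : IGenerates B K)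
    (hK : BddAbove ((fun g => limsup (S · g) atTop) '' K)) :
    ⨆ f : K, limsup (S · f) atTop = ⨆ f : B, limsup (S · f) atTop := by
  rcases B.eq_empty_or_nonempty with rfl | ⟨f₀, hf₀⟩
  · rw [hI.eq_empty]
  have : Nonempty B := ⟨⟨f₀, hf₀⟩⟩
  have : Nonempty K := ⟨⟨f₀, hBK hf₀⟩⟩
  rw [image_eq_range] at hK
  have hB : BddAbove (range fun f : B => limsup (S · f) atTop) := by
    refine hK.mono ?_
    rintro _ ⟨f, rfl⟩
    exact ⟨⟨f, hBK f.2⟩, rfl⟩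
  refine le_antisymm (ciSup_le fun g => le_of_forall_pos_le_add fun ε hε => ?_)
    (ciSup_le fun f => le_ciSup hK ⟨f, hBK f.2⟩)
  refine limsup_le_of_iGenerates hquasi hlsc (locallyLipschitz_limsup hlip hbdd hcobdd).continuous
    hbdd hcobdd hI (fun f hf => ?_) g.2
  exact (le_ciSup hB ⟨f, hf⟩).trans_lt (lt_add_of_pos_right _ hε)

end IGenerates

lemma isBounded_of_isCompact_toWeakDual_image {X : Type*} [NormedAddCommGroup X]
    [NormedSpace ℝ X] [CompleteSpace X] {K : Set (StrongDual ℝ X)}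
    (hK : IsCompact (StrongDual.toWeakDual '' K)) : Bornology.IsBounded K := by
  rw [← StrongDual.toWeakDual.injective.preimage_image K]
  exact WeakDual.isBounded_iff_isVonNBounded.2 (hK.isVonNBounded ℝ)

theorem simons_equality_strong_matrix_general {X : Type*} [NormedAddCommGroup X]
    [NormedSpace ℝ X] [CompleteSpace X]
    (K : Set (StrongDual ℝ X)) (hKcomp : IsCompact (⇑StrongDual.toWeakDual '' K))
    (B : Set (StrongDual ℝ X)) (hBK : B ⊆ K) (hI : IGenerates B K)
    (a : ℕ → ℕ → ℝ) (hpos : ∀ n k, 0 ≤ a n k)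
    (hsummable : ∀ n, Summable fun k => a n k)
    (hbdd : ∃ C : ℝ, ∀ n, ∑' k, a n k ≤ C)
    (p : ℝ) (hp : 1 ≤ p)
    (x : ℕ → X) (R : ℝ) (hR : ∀ n, ‖x n‖ ≤ R) :
    (⨆ f : K, limsup (fun n => ∑' k, a n k * |(f : StrongDual ℝ X) (x k)| ^ p) atTop) =
      ⨆ f : B, limsup (fun n => ∑' k, a n k * |(f : StrongDual ℝ X) (x k)| ^ p) atTop := by
  obtain ⟨C, hC⟩ := hbdd
  have hp0 : 0 ≤ p := zero_le_one.trans hp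
  have hR0 : 0 ≤ R := (norm_nonneg _).trans (hR 0)
  have hC0 : 0 ≤ C := (tsum_nonneg (hpos 0)).trans (hC 0)
  set S : ℕ → StrongDual ℝ X → ℝ := fun n g => ∑' k, a n k * |g (x k)| ^ p
  have hS0 : ∀ n g, 0 ≤ S n g := fun n g =>
    tsum_nonneg fun k => mul_nonneg (hpos n k) (by positivity)
  have hSle : ∀ n g, S n g ≤ C * (‖g‖ * R) ^ p := fun n g =>
    (tsum_mul_abs_rpow_le (hpos n) (hsummable n) hp0 (abs_apply_le hR g)).trans
      (by gcongr; exact hC n)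
  have hbddS : ∀ g, IsBoundedUnder (· ≤ ·) atTop (S · g) := fun g =>
    isBoundedUnder_of ⟨_, (hSle · g)⟩
  have hcobddS : ∀ g, IsCoboundedUnder (· ≤ ·) atTop (S · g) := fun g =>
    (isBoundedUnder_of ⟨0, (hS0 · g)⟩).isCoboundedUnder_le
  obtain ⟨D, hD⟩ := isBounded_iff_forall_norm_le.1 (isBounded_of_isCompact_toWeakDual_image hKcomp)
  refine iSup_limsup_eq_of_iGenerates (S := S)
    (fun n => (convexOn_tsum_mul_abs_rpow_apply (hpos n) (hsummable n) hp hR).quasiconvexOn)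
    (fun n => lowerSemicontinuous_tsum_mul_abs_rpow_apply (hpos n) (hsummable n) hp0 hR)
    (fun g => ⟨_, ball 0 (‖g‖ + 1), isOpen_ball.mem_nhds (by simp), fun n =>
      (lipschitzOnWith_tsum_mul_abs_rpow_apply (hpos n) (hsummable n) hp hR (hC n) _).mono
        ball_subset_closedBall⟩)
    hbddS hcobddS hBK hI ⟨C * (D * R) ^ p, ?_⟩
  rintro _ ⟨g, hg, rfl⟩
  exact limsup_le_of_le (hcobddS g) (Eventually.of_forall fun n =>
    (hSle n g).trans (by gcongr; exact hD g hg))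

/-- Simons-type equality for strong matrix summability: if `B` (I)-generates the
weak*-compact convex set `K`, `A` is a positive regular matrix and `p ≥ 1`, then
for every bounded sequence `(x_n)` in `X`:
`sup_{f ∈ K} limsup_n ∑_k a_{nk}|f(x_k)|^p = sup_{f ∈ B} limsup_n ∑_k a_{nk}|f(x_k)|^p`. -/
theorem simons_equality_strong_matrix {X : Type*} [NormedAddCommGroup X]
    [NormedSpace ℝ X] [CompleteSpace X]
    (K : Set (StrongDual ℝ X)) (hKcomp : IsCompact (⇑StrongDual.toWeakDual '' K))
    (hKconv : Convex ℝ K)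
    (B : Set (StrongDual ℝ X)) (hBK : B ⊆ K) (hI : IGenerates B K)
    (a : ℕ → ℕ → ℝ) (hpos : ∀ n k, 0 ≤ a n k)
    (hsummable : ∀ n, Summable fun k => a n k)
    (hbdd : ∃ C : ℝ, ∀ n, ∑' k, a n k ≤ C)
    (hrow : Tendsto (fun n => ∑' k, a n k) atTop (nhds 1))
    (hcol : ∀ k, Tendsto (fun n => a n k) atTop (nhds 0))
    (p : ℝ) (hp : 1 ≤ p)
    (x : ℕ → X) (R : ℝ) (hR : ∀ n, ‖x n‖ ≤ R) :
    (⨆ f : K, limsup (fun n => ∑' k, a n k * |(f : StrongDual ℝ X) (x k)| ^ p) atTop) =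
      ⨆ f : B, limsup (fun n => ∑' k, a n k * |(f : StrongDual ℝ X) (x k)| ^ p) atTop :=
  simons_equality_strong_matrix_general K hKcomp B hBK hI a hpos hsummable hbdd p hp x R hR
end

section
/- Let B be an (I)-generating subset of B_{X*} for a real Banach space X, and let (x_n) be a bounded sequence in X such that (x*(x_n))_n is statistically pre-Cauchy for every x* ∈ B. Then (x*(x_n))_n is statistically pre-Cauchy for every x* ∈ X*. -/
open Filter NormedSpace

/-- A real sequence is statistically pre-Cauchy if for every `ε > 0` the
proportion of pairs `(i,j) ∈ {1,…,n}²` with `|s_i − s_j| ≥ ε` tends to `0`. -/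
def StatPreCauchy (s : ℕ → ℝ) : Prop :=
  ∀ ε > 0, Tendsto
    (fun n : ℕ =>
      ((((Finset.Icc 1 n) ×ˢ (Finset.Icc 1 n)).filter
        (fun ij => ε ≤ |s ij.1 - s ij.2|)).card : ℝ) / (n : ℝ) ^ 2)
    atTop (nhds 0)


/-! For a bounded real sequence, being statistically pre-Cauchy is equivalent to the mean of
`|s i - s j|` over `{1,…,n}²` tending to `0` (Markov's inequality in one direction, splitting
into far and near pairs in the other). Applied to `k ↦ f (x k)`, that mean is, for each `n`, a
weak*-continuous seminorm `pₙ` on `X*` with `pₙ f ≤ pₙ g + 2R‖f - g‖`. Given `ε`, the sets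
`Cₘ = {f | pₙ f ≤ ε for all n ≥ m}` are weak*-closed, convex, increasing and cover `B`, so
(I)-generation puts the unit ball in the norm closure of `⋃ₘ Cₘ`; the Lipschitz bound then gives
`pₙ f → 0` on the unit ball, and homogeneity on all of `X*`. -/

open Finset Topology StrongDual

lemma tendsto_zero_of_forall_eventually_le {α : Type*} {l : Filter α} {u : α → ℝ}
    (h0 : ∀ a, 0 ≤ u a) (h : ∀ ε > 0, ∀ᶠ a in l, u a ≤ ε) : Tendsto u l (𝓝 0) :=
  tendsto_order.2 ⟨fun _ hb => .of_forall fun a => hb.trans_le (h0 a),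
    fun b hb => (h (b / 2) (half_pos hb)).mono fun _ ha => ha.trans_lt (half_lt_self hb)⟩

section MeanPairDist

noncomputable def meanPairDist (s : ℕ → ℝ) (n : ℕ) : ℝ :=
  (∑ ij ∈ Icc 1 n ×ˢ Icc 1 n, |s ij.1 - s ij.2|) / (n : ℝ) ^ 2

noncomputable def farPairDensity (s : ℕ → ℝ) (ε : ℝ) (n : ℕ) : ℝ :=
  (((Icc 1 n ×ˢ Icc 1 n).filter fun ij => ε ≤ |s ij.1 - s ij.2|).card : ℝ) / (n : ℝ) ^ 2

variable (s t : ℕ → ℝ) (n : ℕ) {ε M : ℝ}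

theorem statPreCauchy_iff_farPairDensity :
    StatPreCauchy s ↔ ∀ ε > 0, Tendsto (farPairDensity s ε) atTop (𝓝 0) :=
  Iff.rfl

lemma card_Icc_one_product_Icc_one : ((Icc 1 n ×ˢ Icc 1 n).card : ℝ) = (n : ℝ) ^ 2 := by
  simp [card_product, sq]

lemma meanPairDist_nonneg : 0 ≤ meanPairDist s n := by
  unfold meanPairDist; positivity

lemma meanPairDist_add_le : meanPairDist (s + t) n ≤ meanPairDist s n + meanPairDist t n := by
  rw [meanPairDist, meanPairDist, meanPairDist, ← add_div, ← sum_add_distrib]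
  gcongr with ij
  calc |(s + t) ij.1 - (s + t) ij.2| = |(s ij.1 - s ij.2) + (t ij.1 - t ij.2)| := by
        simp only [Pi.add_apply]; ring_nf
    _ ≤ _ := abs_add_le _ _

lemma meanPairDist_smul (c : ℝ) : meanPairDist (c • s) n = |c| * meanPairDist s n := by
  simp only [meanPairDist, Pi.smul_apply, smul_eq_mul, ← mul_sub, abs_mul, ← mul_sum,
    mul_div_assoc]

lemma meanPairDist_le_two_mul (hs : ∀ k, |s k| ≤ M) : meanPairDist s n ≤ 2 * M := by
  have hM : 0 ≤ M := (abs_nonneg _).trans (hs 0)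
  refine div_le_of_le_mul₀ (by positivity) (by positivity) ?_
  calc ∑ ij ∈ Icc 1 n ×ˢ Icc 1 n, |s ij.1 - s ij.2|
      ≤ ∑ ij ∈ Icc 1 n ×ˢ Icc 1 n, 2 * M :=
        sum_le_sum fun ij _ => (abs_sub _ _).trans (by linarith [hs ij.1, hs ij.2])
    _ = 2 * M * (n : ℝ) ^ 2 := by
        rw [sum_const, nsmul_eq_mul, card_Icc_one_product_Icc_one, mul_comm]

lemma mul_farPairDensity_le_meanPairDist :
    ε * farPairDensity s ε n ≤ meanPairDist s n := by
  rw [farPairDensity, meanPairDist, mul_div_assoc']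
  gcongr
  calc ε * ((Icc 1 n ×ˢ Icc 1 n).filter fun ij => ε ≤ |s ij.1 - s ij.2|).card
      ≤ ∑ ij ∈ (Icc 1 n ×ˢ Icc 1 n).filter (fun ij => ε ≤ |s ij.1 - s ij.2|),
          |s ij.1 - s ij.2| := by
        rw [mul_comm, ← nsmul_eq_mul]
        exact card_nsmul_le_sum _ _ _ fun ij hij => (mem_filter.1 hij).2
    _ ≤ _ := sum_le_sum_of_subset_of_nonneg (filter_subset _ _) fun _ _ _ => abs_nonneg _

lemma meanPairDist_le_farPairDensity (hs : ∀ k, |s k| ≤ M) (hε : 0 ≤ ε) :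
    meanPairDist s n ≤ 2 * M * farPairDensity s ε n + ε := by
  set P := Icc 1 n ×ˢ Icc 1 n
  have hfar : ∑ ij ∈ P.filter (fun ij => ε ≤ |s ij.1 - s ij.2|), |s ij.1 - s ij.2|
      ≤ (P.filter fun ij => ε ≤ |s ij.1 - s ij.2|).card * (2 * M) := by
    rw [← nsmul_eq_mul]
    exact sum_le_card_nsmul _ _ _ fun ij _ => (abs_sub _ _).trans (by linarith [hs ij.1, hs ij.2])
  have hnear : ∑ ij ∈ P.filter (fun ij => ¬ ε ≤ |s ij.1 - s ij.2|), |s ij.1 - s ij.2|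
      ≤ (n : ℝ) ^ 2 * ε := by
    calc _ ≤ (P.filter fun ij => ¬ ε ≤ |s ij.1 - s ij.2|).card • ε :=
          sum_le_card_nsmul _ _ _ fun ij hij => (not_le.1 (mem_filter.1 hij).2).le
      _ ≤ P.card • ε := by gcongr; exact filter_subset _ _
      _ = (n : ℝ) ^ 2 * ε := by rw [nsmul_eq_mul, card_Icc_one_product_Icc_one]
  rw [meanPairDist, farPairDensity, ← sum_filter_add_sum_filter_not P
    (fun ij => ε ≤ |s ij.1 - s ij.2|), add_div]
  gcongr ?_ + ?_
  · rw [mul_div_assoc', mul_comm]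
    exact div_le_div_of_nonneg_right hfar (by positivity)
  · exact div_le_of_le_mul₀ (by positivity) hε (by linarith)

theorem statPreCauchy_iff_tendsto_meanPairDist (hs : ∀ k, |s k| ≤ M) :
    StatPreCauchy s ↔ Tendsto (meanPairDist s) atTop (𝓝 0) := by
  rw [statPreCauchy_iff_farPairDensity]
  constructor
  · intro h
    refine tendsto_zero_of_forall_eventually_le (meanPairDist_nonneg s) fun ε hε => ?_
    have hlim : Tendsto (fun n => 2 * M * farPairDensity s (ε / 2) n + ε / 2) atTop
        (𝓝 (2 * M * 0 + ε / 2)) :=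
      ((h _ (half_pos hε)).const_mul _).add_const _
    have hlt : 2 * M * 0 + ε / 2 < ε := by linarith
    filter_upwards [hlim.eventually (eventually_le_nhds hlt)] with n hn
    exact (meanPairDist_le_farPairDensity s n hs (half_pos hε).le).trans hn
  · intro h ε hε
    refine squeeze_zero (fun n => by unfold farPairDensity; positivity) (fun n => ?_)
      (by simpa using h.div_const ε)
    rw [le_div_iff₀ hε, mul_comm]
    exact mul_farPairDensity_le_meanPairDist s n

end MeanPairDist

section Dual

variable {X : Type*} [NormedAddCommGroup X] [NormedSpace ℝ X]

theorem IGenerates.subset_closure_iUnion_preimage {B K : Set (StrongDual ℝ X)}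
    (hI : IGenerates B K) {C : ℕ → Set (WeakDual ℝ X)} (hC_mono : Monotone C)
    (hC_closed : ∀ m, IsClosed (C m)) (hC_convex : ∀ m, Convex ℝ (C m))
    (hBC : B ⊆ ⋃ m, toWeakDual ⁻¹' C m) :
    K ⊆ closure (⋃ m, toWeakDual ⁻¹' C m) := by
  have hB : B = ⋃ m, B ∩ toWeakDual ⁻¹' C m := by
    rw [← Set.inter_iUnion, Set.inter_eq_left.2 hBC]
  have hhull (m : ℕ) : wstarClConvHull (B ∩ toWeakDual ⁻¹' C m) ⊆ toWeakDual ⁻¹' C m :=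
    Set.preimage_mono <| closure_minimal
      (convexHull_min (Set.image_subset_iff.2 Set.inter_subset_right) (hC_convex m))
      (hC_closed m)
  have hconvex : Convex ℝ (⋃ m, toWeakDual ⁻¹' C m) :=
    Monotone.directed_le (fun _ _ h => Set.preimage_mono (hC_mono h)) |>.convex_iUnion
      fun m => (hC_convex m).linear_preimage toWeakDual.toLinearMap
  rw [hI _ hB]
  exact closure_mono (convexHull_min (Set.iUnion_mono hhull) hconvex)

variable (x : ℕ → X)

noncomputable def meanPairDistSeminorm (n : ℕ) : Seminorm ℝ (WeakDual ℝ X) :=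
  Seminorm.of (fun φ => meanPairDist (fun k => φ (x k)) n)
    (fun _ _ => meanPairDist_add_le _ _ n) (fun c _ => meanPairDist_smul _ n c)

lemma continuous_meanPairDistSeminorm (n : ℕ) : Continuous (meanPairDistSeminorm x n) :=
  (continuous_finsetSum _ fun _ _ =>
    ((WeakDual.eval_continuous _).sub (WeakDual.eval_continuous _)).abs).div_const _

lemma meanPairDist_le_add_of_norm_le {R : ℝ} (hR : ∀ k, ‖x k‖ ≤ R) (n : ℕ)
    (f g : StrongDual ℝ X) :
    meanPairDist (fun k => f (x k)) n ≤ meanPairDist (fun k => g (x k)) n + 2 * (‖f - g‖ * R) :=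
  calc meanPairDist (fun k => f (x k)) n
      = meanPairDistSeminorm x n (toWeakDual g + toWeakDual (f - g)) := by
        rw [← map_add, add_sub_cancel]; rfl
    _ ≤ _ := map_add_le_add _ _ _
    _ ≤ _ := add_le_add le_rfl <|
        meanPairDist_le_two_mul _ n fun k => (f - g).le_opNorm_of_le (hR k)

theorem IGenerates.tendsto_meanPairDist {B K : Set (StrongDual ℝ X)} (hI : IGenerates B K)
    {R : ℝ} (hR : ∀ k, ‖x k‖ ≤ R)
    (hB : ∀ g ∈ B, Tendsto (meanPairDist fun k => g (x k)) atTop (𝓝 0))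
    {f : StrongDual ℝ X} (hf : f ∈ K) :
    Tendsto (meanPairDist fun k => f (x k)) atTop (𝓝 0) := by
  refine tendsto_zero_of_forall_eventually_le (meanPairDist_nonneg _) fun ε hε => ?_
  let C (m : ℕ) : Set (WeakDual ℝ X) := ⋂ n ≥ m, (meanPairDistSeminorm x n).closedBall 0 (ε / 2)
  have hfC : f ∈ closure (⋃ m, toWeakDual ⁻¹' C m) := by
    refine hI.subset_closure_iUnion_preimage (C := C) ?_ ?_ ?_ ?_ hf
    · exact fun m m' hm => Set.biInter_mono (fun n hn => hm.trans hn) fun _ _ => le_rfl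
    · refine fun m => isClosed_biInter fun n _ => ?_
      rw [Seminorm.closedBall_zero_eq]
      exact isClosed_le (continuous_meanPairDistSeminorm x n) continuous_const
    · exact fun m => convex_iInter₂ fun n _ => Seminorm.convex_closedBall _ _ _
    · intro g hg
      obtain ⟨m, hm⟩ := eventually_atTop.1 <|
        (hB g hg).eventually (eventually_le_nhds (half_pos hε))
      exact Set.mem_iUnion.2 ⟨m, Set.mem_iInter₂.2 fun n hn =>
        (Seminorm.mem_closedBall_zero _).2 (hm n hn)⟩
  obtain ⟨δ, hδ, hRδ⟩ := exists_pos_mul_lt (half_pos hε) (2 * R)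
  obtain ⟨g, hgC, hfg⟩ := Metric.mem_closure_iff.1 hfC δ hδ
  obtain ⟨m, hgm⟩ := Set.mem_iUnion.1 hgC
  have hR0 : 0 ≤ R := (norm_nonneg _).trans (hR 0)
  rw [dist_eq_norm] at hfg
  filter_upwards [eventually_ge_atTop m] with n hn
  calc meanPairDist (fun k => f (x k)) n
      ≤ meanPairDist (fun k => g (x k)) n + 2 * (‖f - g‖ * R) :=
        meanPairDist_le_add_of_norm_le x hR n f g
    _ ≤ ε / 2 + ε / 2 := by
        gcongr
        · exact (Seminorm.mem_closedBall_zero _).1 (Set.mem_iInter₂.1 hgm n hn)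
        · nlinarith
    _ = ε := add_halves ε

end Dual

theorem weakly_stat_pre_cauchy_general {X : Type*} [NormedAddCommGroup X]
    [NormedSpace ℝ X]
    (B : Set (StrongDual ℝ X))
    (hI : IGenerates B (Metric.closedBall (0 : StrongDual ℝ X) 1))
    (x : ℕ → X) (R : ℝ) (hR : ∀ n, ‖x n‖ ≤ R)
    (h : ∀ f ∈ B, StatPreCauchy fun n => f (x n)) :
    ∀ f : StrongDual ℝ X, StatPreCauchy fun n => f (x n) := by
  have hiff (g : StrongDual ℝ X) :
      StatPreCauchy (fun n => g (x n)) ↔ Tendsto (meanPairDist fun k => g (x k)) atTop (𝓝 0) :=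
    statPreCauchy_iff_tendsto_meanPairDist _ fun k => g.le_opNorm_of_le (hR k)
  have hball (g : StrongDual ℝ X) (hg : g ∈ Metric.closedBall 0 1) :
      Tendsto (meanPairDist fun k => g (x k)) atTop (𝓝 0) :=
    hI.tendsto_meanPairDist x hR (fun g hg => (hiff g).1 (h g hg)) hg
  intro f
  have hc : 0 < ‖f‖ + 1 := by positivity
  have hf : (‖f‖ + 1)⁻¹ • f ∈ Metric.closedBall 0 1 := by
    rw [mem_closedBall_zero_iff, norm_smul, norm_inv, Real.norm_of_nonneg hc.le,
      inv_mul_le_one₀ hc]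
    exact le_add_of_nonneg_right zero_le_one
  rw [hiff, ← smul_inv_smul₀ hc.ne' f]
  convert (hball _ hf).const_mul |‖f‖ + 1| using 1
  · exact funext fun n => meanPairDist_smul _ n _
  · rw [mul_zero]

/-- If `B` (I)-generates the dual unit ball and `(x_n)` is a bounded sequence
such that `(f(x_n))ₙ` is statistically pre-Cauchy for every `f ∈ B`, then
`(f(x_n))ₙ` is statistically pre-Cauchy for every `f ∈ X*`. -/
theorem weakly_stat_pre_cauchy {X : Type*} [NormedAddCommGroup X]
    [NormedSpace ℝ X] [CompleteSpace X]
    (B : Set (StrongDual ℝ X)) (hB1 : B ⊆ Metric.closedBall (0 : StrongDual ℝ X) 1)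
    (hI : IGenerates B (Metric.closedBall (0 : StrongDual ℝ X) 1))
    (x : ℕ → X) (R : ℝ) (hR : ∀ n, ‖x n‖ ≤ R)
    (h : ∀ f ∈ B, StatPreCauchy fun n => f (x n)) :
    ∀ f : StrongDual ℝ X, StatPreCauchy fun n => f (x n) :=
  weakly_stat_pre_cauchy_general B hI x R hR h
end
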